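/- arXiv:2007.06361 — 4 statements merged into one kernel-verified Lean document; each statement's English description precedes it below -/
import Mathlib

section
/- Let L > 0, let K be a positive integer, and let 0 = t₀ < t₁ < ⋯ < t_K = L be a partition of [0, L]. Let f : ℝ → ℝ be L-periodic, bounded, of bounded variation on [0, L], monotone (nondecreasing or nonincreasing) on each interval [t_{i−1}, t_i], continuous at 0, and continuous at every point at which f attains a local maximum and which is not contained in an open interval on which f is constant. Then there exists a sequence (g_n)_{n≥1} of continuous L-periodic functions ℝ → ℝ such that: (1) g_n(x) ≤ g_{n+1}(x) ≤ f(x) for all x ∈ ℝ and all n; (2) g_n(x) → f(x) as n → ∞ at every point x at which f is continuous; (3) for every point x₀ at which f is continuous and attains a local minimum, g_n(x₀) = f(x₀) for all sufficiently large n; (4) for every open interval (s, t) on which f is monotone nondecreasing (respectively nonincreasing) and for every n with s + 3/n ≤ t − 3/n, the function g_n is monotone nondecreasing (respectively nonincreasing) on [s + 3/n, t − 3/n]; (5) limsup_{n→∞} Var(g_n; [0, L]) ≤ Var(f; [0, L]). -/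
/-!
The approximants are lower envelopes on dyadic grids. For a mesh `δ`, the value at the node `jδ`
is the infimum of `f` over the window `[(j - 1)δ, (j + 1)δ]` (the smaller of the infima over the
two adjacent cells), and `g` interpolates these values linearly. Each point of a cell lies in the
windows of both endpoints, so `g ≤ f`; at the nodes of the halved grid the coarse interpolant is
still below `f` on the finer windows, so the sequence increases; near a point of continuity, or
of local minimum, of `f` all window infima are close to, or equal to, `f x`.

For the variation, near-minimizers of the windows can be chosen nondecreasing in `j`, so the
variation of `g` over a period is at most that of `f` over the period enlarged by `δ` on both
sides. By periodicity the two extra pieces sit at the ends of `[0, L]`, and since `f` has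
bounded variation and is continuous at `0`, their variation tends to `0` with `δ`.
-/

open Filter Set Topology
open scoped ENNReal

noncomputable def gridInterp (δ : ℝ) (v : ℤ → ℝ) (x : ℝ) : ℝ :=
  v ⌊x / δ⌋ + (v (⌊x / δ⌋ + 1) - v ⌊x / δ⌋) * Int.fract (x / δ)

section Grid

variable {δ : ℝ}

lemma mem_Ico_floor_div (hδ : 0 < δ) (x : ℝ) :
    x ∈ Ico (⌊x / δ⌋ * δ) ((⌊x / δ⌋ + 1) * δ) := by
  constructor
  · rw [← le_div_iff₀ hδ]; exact Int.floor_le _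
  · rw [← div_lt_iff₀ hδ]; exact Int.lt_floor_add_one _

lemma mem_Ioc_ceil_div (hδ : 0 < δ) (x : ℝ) :
    x ∈ Ioc ((⌈x / δ⌉ - 1 : ℤ) * δ) (((⌈x / δ⌉ - 1 : ℤ) + 1) * δ) := by
  push_cast
  constructor
  · rw [← lt_div_iff₀ hδ]; linarith [Int.ceil_lt_add_one (x / δ)]
  · rw [sub_add_cancel, ← div_le_iff₀ hδ]; exact Int.le_ceil _

lemma continuous_of_continuousOn_Icc_intCast_mul {g : ℝ → ℝ} (hδ : 0 < δ)
    (hg : ∀ j : ℤ, ContinuousOn g (Icc (j * δ) ((j + 1) * δ))) : Continuous g := by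
  refine continuous_iff_continuousAt.2 fun x => continuousAt_iff_continuous_left_right.2 ⟨?_, ?_⟩
  · have hx := mem_Ioc_ceil_div hδ x
    exact (hg _ x (Ioc_subset_Icc_self hx)).mono_of_mem_nhdsWithin (Icc_mem_nhdsLE_of_mem hx)
  · have hx := mem_Ico_floor_div hδ x
    exact (hg _ x (Ico_subset_Icc_self hx)).mono_of_mem_nhdsWithin (Icc_mem_nhdsGE_of_mem hx)

lemma eVariationOn_neg (g : ℝ → ℝ) (s : Set ℝ) :
    eVariationOn (fun x => -g x) s = eVariationOn g s := by
  simp only [eVariationOn, edist_neg_neg]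

namespace gridInterp

variable {v w : ℤ → ℝ}

lemma eq_of_mem_Icc (hδ : 0 < δ) {j : ℤ} {x : ℝ} (hx : x ∈ Icc (j * δ) ((j + 1) * δ)) :
    gridInterp δ v x = v j + (v (j + 1) - v j) * (x / δ - j) := by
  obtain ⟨h1, h2⟩ := hx
  rcases h2.lt_or_eq with h2 | rfl
  · have : ⌊x / δ⌋ = j := by
      rw [Int.floor_eq_iff, le_div_iff₀ hδ, div_lt_iff₀ hδ]; exact ⟨h1, h2⟩
    rw [gridInterp, Int.fract, this]
  · have : ((j : ℝ) + 1) * δ / δ = ((j + 1 : ℤ) : ℝ) := by push_cast; field_simp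
    rw [gridInterp, this, Int.floor_intCast, Int.fract_intCast]
    push_cast
    ring

lemma apply_intCast_mul (hδ : 0 < δ) (j : ℤ) : gridInterp δ v (j * δ) = v j := by
  rw [eq_of_mem_Icc hδ ⟨le_rfl, by nlinarith⟩, mul_div_cancel_right₀ _ hδ.ne']
  ring

lemma le_max (x : ℝ) :
    gridInterp δ v x ≤ max (v ⌊x / δ⌋) (v (⌊x / δ⌋ + 1)) := by
  have h0 := Int.fract_nonneg (x / δ)
  have h1 := Int.fract_lt_one (x / δ)
  rw [gridInterp]
  rcases le_total (v ⌊x / δ⌋) (v (⌊x / δ⌋ + 1)) with h | h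
  · rw [max_eq_right h]; nlinarith
  · rw [max_eq_left h]; nlinarith

lemma min_le (x : ℝ) :
    min (v ⌊x / δ⌋) (v (⌊x / δ⌋ + 1)) ≤ gridInterp δ v x := by
  have h0 := Int.fract_nonneg (x / δ)
  have h1 := Int.fract_lt_one (x / δ)
  rw [gridInterp]
  rcases le_total (v ⌊x / δ⌋) (v (⌊x / δ⌋ + 1)) with h | h
  · rw [min_eq_left h]; nlinarith
  · rw [min_eq_right h]; nlinarith

lemma mono (hvw : v ≤ w) : gridInterp δ v ≤ gridInterp δ w := by
  intro x
  have h0 := Int.fract_nonneg (x / δ)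
  have h1 := Int.fract_lt_one (x / δ)
  have := hvw ⌊x / δ⌋
  have := hvw (⌊x / δ⌋ + 1)
  simp only [gridInterp]
  nlinarith

lemma neg : gridInterp δ (-v) = -gridInterp δ v := by
  ext x
  simp only [gridInterp, Pi.neg_apply]
  ring

lemma continuous (hδ : 0 < δ) : Continuous (gridInterp δ v) :=
  continuous_of_continuousOn_Icc_intCast_mul hδ fun j =>
    ContinuousOn.congr (by fun_prop) fun _ hx => eq_of_mem_Icc hδ hx

lemma periodic {N : ℤ} (hδ : 0 < δ) (hv : Function.Periodic v N) :
    Function.Periodic (gridInterp δ v) (N * δ) := by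
  intro x
  have : (x + N * δ) / δ = x / δ + N := by field_simp
  simp only [gridInterp, this, Int.floor_add_intCast, Int.fract_add_intCast, add_right_comm _ N,
    hv _]

lemma eq_half (hδ : 0 < δ) (x : ℝ) :
    gridInterp δ v x = gridInterp (δ / 2) (fun k => gridInterp δ v (k * (δ / 2))) x := by
  set k := ⌊x / (δ / 2)⌋ with hk
  obtain ⟨j, hj₁, hj₂⟩ : ∃ j : ℤ, (j : ℝ) * δ ≤ k * (δ / 2) ∧ (k + 1) * (δ / 2) ≤ (j + 1) * δ := by
    obtain ⟨j, hkj | hkj⟩ := Int.even_or_odd' k <;> refine ⟨j, ?_, ?_⟩ <;> rw [hkj] <;>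
      push_cast <;> linarith
  have hcell : ∀ y ∈ Icc (k * (δ / 2)) ((k + 1) * (δ / 2)),
      gridInterp δ v y = v j + (v (j + 1) - v j) * (y / δ - j) := fun y hy =>
    eq_of_mem_Icc hδ ⟨hj₁.trans hy.1, hy.2.trans hj₂⟩
  have hx : x ∈ Icc (k * (δ / 2)) ((k + 1) * (δ / 2)) :=
    Ico_subset_Icc_self (mem_Ico_floor_div (half_pos hδ) x)
  rw [gridInterp.eq_1 (δ / 2), ← hk, Int.fract, ← hk, hcell x hx, Int.cast_add, Int.cast_one,
    hcell _ ⟨le_rfl, by linarith⟩, hcell _ ⟨by linarith, le_rfl⟩]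
  field_simp
  ring

lemma monotoneOn (hδ : 0 < δ) {A B : ℝ}
    (hv : ∀ j : ℤ, A < (j + 1) * δ → j * δ ≤ B → v j ≤ v (j + 1)) :
    MonotoneOn (gridInterp δ v) (Icc A B) := by
  rintro x ⟨hAx, -⟩ y ⟨-, hyB⟩ hxy
  obtain ⟨hx₁, hx₂⟩ := mem_Ico_floor_div hδ x
  obtain ⟨hy₁, hy₂⟩ := mem_Ico_floor_div hδ y
  have hfloor : ⌊x / δ⌋ ≤ ⌊y / δ⌋ := Int.floor_le_floor (by gcongr)
  have hmono : MonotoneOn v (Icc ⌊x / δ⌋ (⌊y / δ⌋ + 1)) := by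
    refine monotoneOn_of_le_add_one ordConnected_Icc fun i _ hi hi' => hv i ?_ ?_
    · have : (⌊x / δ⌋ : ℝ) ≤ i := by exact_mod_cast hi.1
      nlinarith
    · have : (i : ℝ) ≤ ⌊y / δ⌋ := by exact_mod_cast (by linarith [hi'.2] : i ≤ ⌊y / δ⌋)
      nlinarith
  rcases hfloor.lt_or_eq with hlt | heq
  · calc gridInterp δ v x ≤ max (v ⌊x / δ⌋) (v (⌊x / δ⌋ + 1)) := le_max x
      _ = v (⌊x / δ⌋ + 1) := max_eq_right (hmono ⟨le_rfl, by omega⟩ ⟨by omega, by omega⟩ (by omega))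
      _ ≤ v ⌊y / δ⌋ := hmono ⟨by omega, by omega⟩ ⟨by omega, by omega⟩ (by omega)
      _ = min (v ⌊y / δ⌋) (v (⌊y / δ⌋ + 1)) :=
        (min_eq_left (hmono ⟨by omega, by omega⟩ ⟨by omega, le_rfl⟩ (by omega))).symm
      _ ≤ gridInterp δ v y := min_le y
  · have hstep := hmono ⟨le_rfl, by omega⟩ ⟨by omega, by omega⟩ (by omega : ⌊x / δ⌋ ≤ ⌊x / δ⌋ + 1)
    have hfract : Int.fract (x / δ) ≤ Int.fract (y / δ) := by
      rw [Int.fract, Int.fract, heq]; gcongr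
    simp only [gridInterp, ← heq]
    nlinarith

lemma antitoneOn (hδ : 0 < δ) {A B : ℝ}
    (hv : ∀ j : ℤ, A < (j + 1) * δ → j * δ ≤ B → v (j + 1) ≤ v j) :
    AntitoneOn (gridInterp δ v) (Icc A B) := by
  have := monotoneOn (v := -v) hδ fun j h₁ h₂ => neg_le_neg (hv j h₁ h₂)
  rw [neg] at this
  exact fun x hx y hy hxy => neg_le_neg_iff.1 (this hx hy hxy)

lemma eVariationOn_Icc_le_of_le (hδ : 0 < δ) {j : ℤ} (hj : v j ≤ v (j + 1)) :
    eVariationOn (gridInterp δ v) (Icc (j * δ) ((j + 1) * δ)) ≤ .ofReal (v (j + 1) - v j) := by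
  have hjδ : (j : ℝ) * δ ≤ (j + 1) * δ := by nlinarith
  have hmono : MonotoneOn (gridInterp δ v) (Icc (j * δ) ((j + 1) * δ)) := by
    intro x hx y hy hxy
    rw [eq_of_mem_Icc hδ hx, eq_of_mem_Icc hδ hy]
    have : x / δ ≤ y / δ := by gcongr
    nlinarith
  have hright : gridInterp δ v ((j + 1) * δ) = v (j + 1) := by
    exact_mod_cast apply_intCast_mul hδ (j + 1)
  have := hmono.eVariationOn_eq (left_mem_Icc.2 hjδ) (right_mem_Icc.2 hjδ)
  rw [inter_self, apply_intCast_mul hδ, hright] at this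
  exact this.le

lemma eVariationOn_Icc_le (hδ : 0 < δ) (j : ℤ) :
    eVariationOn (gridInterp δ v) (Icc (j * δ) ((j + 1) * δ)) ≤ .ofReal |v (j + 1) - v j| := by
  rcases le_total (v j) (v (j + 1)) with h | h
  · rw [abs_of_nonneg (sub_nonneg.2 h)]
    exact eVariationOn_Icc_le_of_le hδ h
  · have := eVariationOn_Icc_le_of_le (v := -v) hδ (neg_le_neg h)
    rw [neg, Pi.neg_def, eVariationOn_neg, Pi.neg_apply, Pi.neg_apply, neg_sub_neg] at this
    rwa [abs_of_nonpos (sub_nonpos.2 h), neg_sub]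

lemma eVariationOn_Icc_zero_le (hδ : 0 < δ) (N : ℕ) :
    eVariationOn (gridInterp δ v) (Icc 0 (N * δ)) ≤
      ∑ j ∈ Finset.range N, .ofReal |v (j + 1) - v j| := by
  have := eVariationOn.sum (gridInterp δ v) (s := univ) (n := N)
    (show Monotone fun i : ℕ => (i : ℝ) * δ from fun _ _ hab =>
      mul_le_mul_of_nonneg_right (Nat.cast_le.2 hab) hδ.le)
    (fun _ _ _ => mem_univ _)
  simp only [univ_inter, Nat.cast_zero, zero_mul] at this
  rw [← this]
  refine Finset.sum_le_sum fun j _ => ?_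
  have := eVariationOn_Icc_le (v := v) hδ j
  push_cast at this ⊢
  exact this

end gridInterp
end Grid

noncomputable def cellInf (f : ℝ → ℝ) (δ : ℝ) (k : ℤ) : ℝ :=
  sInf (f '' Icc (k * δ) ((k + 1) * δ))

noncomputable def windowInf (f : ℝ → ℝ) (δ : ℝ) (j : ℤ) : ℝ :=
  min (cellInf f δ (j - 1)) (cellInf f δ j)

noncomputable def lowerApprox (f : ℝ → ℝ) (δ : ℝ) : ℝ → ℝ :=
  gridInterp δ (windowInf f δ)

section LowerApprox

variable {f : ℝ → ℝ} {δ : ℝ}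

lemma cellInf_le (hf : BddBelow (range f)) {k : ℤ} {y : ℝ} (hy : y ∈ Icc (k * δ) ((k + 1) * δ)) :
    cellInf f δ k ≤ f y :=
  csInf_le (hf.mono (image_subset_range _ _)) (mem_image_of_mem f hy)

lemma le_cellInf (hδ : 0 ≤ δ) {k : ℤ} {c : ℝ} (h : ∀ y ∈ Icc (k * δ) ((k + 1) * δ), c ≤ f y) :
    c ≤ cellInf f δ k :=
  le_csInf ((nonempty_Icc.2 (by nlinarith)).image f) (forall_mem_image.2 h)

lemma exists_lt_cellInf_add (hδ : 0 ≤ δ) {ε : ℝ} (hε : 0 < ε) (k : ℤ) :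
    ∃ y ∈ Icc (k * δ) ((k + 1) * δ), f y < cellInf f δ k + ε := by
  have hne : (Icc ((k : ℝ) * δ) ((k + 1) * δ)).Nonempty := nonempty_Icc.2 (by nlinarith)
  obtain ⟨_, ⟨y, hy, rfl⟩, hlt⟩ := Real.lt_sInf_add_pos (hne.image f) hε
  exact ⟨y, hy, hlt⟩

lemma windowInf_le (hf : BddBelow (range f)) {j : ℤ} {y : ℝ}
    (hy : y ∈ Icc ((j - 1) * δ) ((j + 1) * δ)) : windowInf f δ j ≤ f y := by
  rcases le_total y (j * δ) with h | h
  · exact (min_le_left _ _).trans (cellInf_le hf ⟨by push_cast; exact hy.1, by push_cast; simpa⟩)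
  · exact (min_le_right _ _).trans (cellInf_le hf ⟨h, hy.2⟩)

lemma le_windowInf (hδ : 0 ≤ δ) {j : ℤ} {c : ℝ}
    (h : ∀ y ∈ Icc ((j - 1) * δ) ((j + 1) * δ), c ≤ f y) : c ≤ windowInf f δ j := by
  refine le_min (le_cellInf hδ fun y hy => h y ?_) (le_cellInf hδ fun y hy => h y ?_)
  · push_cast at hy
    exact ⟨hy.1, by nlinarith [hy.2]⟩
  · exact ⟨by nlinarith [hy.1], hy.2⟩

lemma Function.Periodic.windowInf {N : ℤ} (hf : Function.Periodic f (N * δ)) :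
    Function.Periodic (windowInf f δ) N := by
  have hcell : Function.Periodic (cellInf f δ) N := fun k => by
    have : Icc (((k + N : ℤ) : ℝ) * δ) (((k + N : ℤ) + 1) * δ) =
        (· + N * δ) '' Icc (k * δ) ((k + 1) * δ) := by
      rw [image_add_const_Icc]; push_cast; ring_nf
    rw [cellInf, cellInf, this, ← image_comp, show (f ∘ (· + N * δ)) = f from hf.funext]
  intro j
  rw [_root_.windowInf, _root_.windowInf, show j + N - 1 = j - 1 + N by ring, hcell, hcell]

lemma windowInf_le_windowInf_add_one (hδ : 0 ≤ δ) (hf : BddBelow (range f)) {s u : ℝ}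
    (hmono : MonotoneOn f (Ioo s u)) {j : ℤ} (hs : s < (j - 1) * δ) (hu : (j + 2) * δ < u) :
    windowInf f δ j ≤ windowInf f δ (j + 1) := by
  refine le_windowInf hδ fun y hy => ?_
  push_cast at hy
  refine (windowInf_le hf ⟨le_rfl, by nlinarith⟩).trans (hmono ⟨hs, ?_⟩ ⟨?_, ?_⟩ ?_) <;>
    nlinarith [hy.1, hy.2]

lemma windowInf_add_one_le_windowInf (hδ : 0 ≤ δ) (hf : BddBelow (range f)) {s u : ℝ}
    (hanti : AntitoneOn f (Ioo s u)) {j : ℤ} (hs : s < (j - 1) * δ) (hu : (j + 2) * δ < u) :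
    windowInf f δ (j + 1) ≤ windowInf f δ j := by
  refine le_windowInf hδ fun y hy => ?_
  have hnode : windowInf f δ (j + 1) ≤ f ((j + 2) * δ) :=
    windowInf_le hf ⟨by push_cast; nlinarith, by push_cast; nlinarith⟩
  refine hnode.trans (hanti ⟨?_, ?_⟩ ⟨?_, hu⟩ ?_) <;> nlinarith [hy.1, hy.2]

lemma exists_monotone_lt_windowInf_add (hδ : 0 ≤ δ) {ε : ℝ} (hε : 0 < ε) :
    ∃ q : ℤ → ℝ, Monotone q ∧
      ∀ j : ℤ, q j ∈ Icc ((j - 1) * δ) ((j + 1) * δ) ∧ f (q j) < windowInf f δ j + ε := by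
  choose p hp hlt using exists_lt_cellInf_add (f := f) hδ hε
  -- pick the near-minimizer of the cell realizing the minimum: that cell is `j - 1` or `j`,
  -- so the choice is nondecreasing in `j`
  refine ⟨fun j => if cellInf f δ (j - 1) ≤ cellInf f δ j then p (j - 1) else p j,
    monotone_int_of_le_succ fun j => ?_, fun j => ?_⟩
  · have h₁ := (hp (j - 1)).2
    have h₂ := hp j
    have h₃ := (hp (j + 1)).1
    push_cast at h₁ h₂ h₃
    simp only [add_sub_cancel_right]
    split_ifs <;> linarith [h₂.1, h₂.2]
  · have h₁ := hp (j - 1)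
    have h₂ := hp j
    push_cast at h₁ h₂
    dsimp only
    split_ifs with h
    · exact ⟨⟨h₁.1, by linarith [h₁.2]⟩, by rw [windowInf, min_eq_left h]; exact hlt _⟩
    · exact ⟨⟨by linarith [h₂.1], h₂.2⟩, by
        rw [windowInf, min_eq_right (le_of_not_ge h)]; exact hlt _⟩

lemma sum_abs_windowInf_sub_le_eVariationOn (hδ : 0 ≤ δ) (hf : BddBelow (range f)) (N : ℕ) :
    ∑ j ∈ Finset.range N, .ofReal |windowInf f δ (j + 1) - windowInf f δ j| ≤
      eVariationOn f (Icc (-δ) ((N + 1) * δ)) := by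
  refine ENNReal.le_of_forall_pos_le_add fun η hη _ => ?_
  set ε : ℝ := η / (2 * (N + 1))
  have hε : 0 < ε := by positivity
  obtain ⟨q, hq, hq'⟩ := exists_monotone_lt_windowInf_add (f := f) hδ hε
  have hterm (j : ℤ) : ENNReal.ofReal |windowInf f δ (j + 1) - windowInf f δ j| ≤
      edist (f (q (j + 1))) (f (q j)) + .ofReal (2 * ε) := by
    have h₀ := windowInf_le hf (hq' j).1
    have h₁ := windowInf_le hf (hq' (j + 1)).1
    have h₂ := (hq' j).2
    have h₃ := (hq' (j + 1)).2
    rw [edist_dist, Real.dist_eq, ← ENNReal.ofReal_add (abs_nonneg _) (by positivity)]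
    refine ENNReal.ofReal_le_ofReal ?_
    rw [abs_le] at *
    constructor <;> cases abs_cases (f (q (j + 1)) - f (q j)) <;> linarith
  have hvar : ∑ j ∈ Finset.range N, edist (f (q (j + 1))) (f (q j)) ≤
      eVariationOn f (Icc (-δ) ((N + 1) * δ)) := by
    have := eVariationOn.sum_le_of_monotoneOn_Iic (f := f) (s := Icc (-δ) ((N + 1) * δ)) (n := N)
      (u := fun i : ℕ => q i) (fun a _ b _ hab => hq (by exact_mod_cast hab)) fun i hi => by
        obtain ⟨h₁, h₂⟩ := (hq' i).1
        have : (i : ℝ) ≤ N := by exact_mod_cast hi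
        push_cast at h₁ h₂
        constructor <;> nlinarith
    simpa using this
  have hslack : (N : ℝ≥0∞) * .ofReal (2 * ε) ≤ η := by
    rw [← ENNReal.ofReal_natCast, ← ENNReal.ofReal_mul (Nat.cast_nonneg _),
      ← ENNReal.ofReal_coe_nnreal]
    refine ENNReal.ofReal_le_ofReal ?_
    have : (N : ℝ) * (2 * ε) = η * (N / (N + 1)) := by simp only [ε]; field_simp
    rw [this]
    exact mul_le_of_le_one_right η.2 ((div_le_one (by positivity)).2 (by linarith))
  calc ∑ j ∈ Finset.range N, .ofReal |windowInf f δ (j + 1) - windowInf f δ j|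
      ≤ ∑ j ∈ Finset.range N, (edist (f (q (j + 1))) (f (q j)) + .ofReal (2 * ε)) :=
        Finset.sum_le_sum fun j _ => hterm j
    _ = ∑ j ∈ Finset.range N, edist (f (q (j + 1))) (f (q j)) + N * .ofReal (2 * ε) := by
        rw [Finset.sum_add_distrib, Finset.sum_const, Finset.card_range, nsmul_eq_mul]
    _ ≤ eVariationOn f (Icc (-δ) ((N + 1) * δ)) + η := add_le_add hvar hslack

lemma lowerApprox_le (hδ : 0 < δ) (hf : BddBelow (range f)) (x : ℝ) : lowerApprox f δ x ≤ f x := by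
  obtain ⟨h₁, h₂⟩ := mem_Ico_floor_div hδ x
  refine (gridInterp.le_max x).trans (max_le (windowInf_le hf ⟨?_, ?_⟩) (windowInf_le hf ⟨?_, ?_⟩))
  all_goals push_cast; linarith

lemma le_lowerApprox (hδ : 0 < δ) {x c : ℝ} (h : ∀ y ∈ Icc (x - 2 * δ) (x + 2 * δ), c ≤ f y) :
    c ≤ lowerApprox f δ x := by
  obtain ⟨h₁, h₂⟩ := mem_Ico_floor_div hδ x
  refine (le_min (le_windowInf hδ.le fun y hy => h y ⟨?_, ?_⟩)
    (le_windowInf hδ.le fun y hy => h y ⟨?_, ?_⟩)).trans (gridInterp.min_le x)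
  all_goals push_cast at hy; linarith [hy.1, hy.2]

lemma lowerApprox_le_lowerApprox_half (hδ : 0 < δ) (hf : BddBelow (range f)) (x : ℝ) :
    lowerApprox f δ x ≤ lowerApprox f (δ / 2) x := by
  rw [lowerApprox, gridInterp.eq_half hδ]
  refine gridInterp.mono (fun k => le_windowInf (half_pos hδ).le fun y hy => ?_) x
  obtain ⟨j, rfl | rfl⟩ := Int.even_or_odd' k
  · have : ((2 * j : ℤ) : ℝ) * (δ / 2) = j * δ := by push_cast; ring
    rw [this, gridInterp.apply_intCast_mul hδ]
    push_cast at hy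
    exact windowInf_le hf ⟨by linarith [hy.1], by linarith [hy.2]⟩
  · -- an odd fine node is the midpoint of a coarse cell, whose two windows both contain `y`
    have hmid : ((2 * j + 1 : ℤ) : ℝ) * (δ / 2) ∈ Icc (j * δ) ((j + 1) * δ) := by
      push_cast; constructor <;> linarith
    rw [gridInterp.eq_of_mem_Icc hδ hmid]
    push_cast at hy
    have h₀ := windowInf_le hf (δ := δ) (j := j) (y := y) ⟨by linarith [hy.1], by linarith [hy.2]⟩
    have h₁ := windowInf_le hf (δ := δ) (j := j + 1) (y := y) ⟨by push_cast; linarith [hy.1],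
      by push_cast; linarith [hy.2]⟩
    have : ((2 * j + 1 : ℤ) : ℝ) * (δ / 2) / δ - j = 1 / 2 := by push_cast; field_simp; ring
    rw [this]
    linarith

lemma continuous_lowerApprox (hδ : 0 < δ) : Continuous (lowerApprox f δ) :=
  gridInterp.continuous hδ

lemma Function.Periodic.lowerApprox (hδ : 0 < δ) {N : ℕ} (hf : Function.Periodic f (N * δ)) :
    Function.Periodic (lowerApprox f δ) (N * δ) := by
  have := gridInterp.periodic hδ (Function.Periodic.windowInf (N := N) (by exact_mod_cast hf))
  exact_mod_cast this

lemma monotoneOn_lowerApprox (hδ : 0 < δ) (hf : BddBelow (range f)) {s u r : ℝ}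
    (hmono : MonotoneOn f (Ioo s u)) (hr : 2 * δ < r) :
    MonotoneOn (lowerApprox f δ) (Icc (s + r) (u - r)) :=
  gridInterp.monotoneOn hδ fun _ hA hB =>
    windowInf_le_windowInf_add_one hδ.le hf hmono (by linarith) (by linarith)

lemma antitoneOn_lowerApprox (hδ : 0 < δ) (hf : BddBelow (range f)) {s u r : ℝ}
    (hanti : AntitoneOn f (Ioo s u)) (hr : 2 * δ < r) :
    AntitoneOn (lowerApprox f δ) (Icc (s + r) (u - r)) :=
  gridInterp.antitoneOn hδ fun _ hA hB =>
    windowInf_add_one_le_windowInf hδ.le hf hanti (by linarith) (by linarith)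

lemma eVariationOn_lowerApprox_le (hδ : 0 < δ) (hf : BddBelow (range f)) (N : ℕ) :
    eVariationOn (lowerApprox f δ) (Icc 0 (N * δ)) ≤ eVariationOn f (Icc (-δ) (N * δ + δ)) := by
  have := sum_abs_windowInf_sub_le_eVariationOn hδ.le hf N
  rw [add_mul, one_mul] at this
  exact (gridInterp.eVariationOn_Icc_zero_le hδ N).trans this

section Limits

variable {ι : Type*} {l : Filter ι} {δ : ι → ℝ}

lemma eventually_le_lowerApprox (hδ : ∀ i, 0 < δ i) (hlim : Tendsto δ l (𝓝 0)) {x c : ℝ}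
    (h : ∀ᶠ y in 𝓝 x, c ≤ f y) : ∀ᶠ i in l, c ≤ lowerApprox f (δ i) x := by
  obtain ⟨r, hr, hball⟩ := Metric.eventually_nhds_iff.1 h
  filter_upwards [hlim.eventually (gt_mem_nhds (half_pos hr))] with i hi
  refine le_lowerApprox (hδ i) fun y hy => hball ?_
  rw [Real.dist_eq, abs_lt]
  constructor <;> linarith [hy.1, hy.2]

lemma tendsto_lowerApprox (hδ : ∀ i, 0 < δ i) (hlim : Tendsto δ l (𝓝 0))
    (hf : BddBelow (range f)) {x : ℝ} (hx : ContinuousAt f x) :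
    Tendsto (fun i => lowerApprox f (δ i) x) l (𝓝 (f x)) := by
  refine tendsto_order.2 ⟨fun a ha => ?_, fun b hb =>
    Eventually.of_forall fun i => (lowerApprox_le (hδ i) hf x).trans_lt hb⟩
  obtain ⟨a', ha', ha'x⟩ := exists_between ha
  have hnear : ∀ᶠ y in 𝓝 x, a' ≤ f y := (hx.eventually (lt_mem_nhds ha'x)).mono fun _ => le_of_lt
  exact (eventually_le_lowerApprox hδ hlim hnear).mono fun i hi => ha'.trans_le hi

lemma IsLocalMin.eventually_lowerApprox_eq (hδ : ∀ i, 0 < δ i) (hlim : Tendsto δ l (𝓝 0))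
    (hf : BddBelow (range f)) {x : ℝ} (hx : IsLocalMin f x) :
    ∀ᶠ i in l, lowerApprox f (δ i) x = f x :=
  (eventually_le_lowerApprox hδ hlim hx).mono fun i hi => (lowerApprox_le (hδ i) hf x).antisymm hi

end Limits

end LowerApprox

section PeriodicVariation

variable {f : ℝ → ℝ} {L : ℝ}

lemma Function.Periodic.eVariationOn_Icc_add_const (hf : Function.Periodic f L) (a b : ℝ) :
    eVariationOn f (Icc (a + L) (b + L)) = eVariationOn f (Icc a b) := by
  rw [← image_add_const_Icc, ← eVariationOn.comp_eq_of_monotoneOn f _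
    (fun x _ y _ hxy => add_le_add_left hxy L), show f ∘ (· + L) = f from hf.funext]

lemma Function.Periodic.tendsto_eVariationOn_Icc_neg_add (hL : 0 < L)
    (hper : Function.Periodic f L) (hBV : BoundedVariationOn f (Icc 0 L))
    (h0 : ContinuousAt f 0) :
    Tendsto (fun δ => eVariationOn f (Icc (-δ) (L + δ))) (𝓝[>] 0)
      (𝓝 (eVariationOn f (Icc 0 L))) := by
  have hcontL : ContinuousAt f L := by
    have := h0.comp_of_eq (continuous_sub_right L).continuousAt (sub_self L)
    rwa [show f ∘ (· - L) = f from funext hper.sub_eq] at this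
  have hleft : Tendsto (fun δ => eVariationOn f (Icc 0 L ∩ Icc (L - δ) L)) (𝓝[>] 0) (𝓝 0) := by
    refine (hBV.tendsto_eVariationOn_Icc_zero_left hcontL.continuousWithinAt).comp
      (tendsto_nhdsWithin_iff.2 ⟨?_, ?_⟩)
    · simpa using (continuous_sub_left L).continuousAt.tendsto.mono_left
        (nhdsWithin_le_nhds (a := (0 : ℝ)) (s := Ioi 0))
    · filter_upwards [Ioc_mem_nhdsGT hL] with δ hδ
      exact ⟨by linarith [hδ.2], by linarith [hδ.1]⟩
  have hright : Tendsto (fun δ => eVariationOn f (Icc 0 L ∩ Icc 0 δ)) (𝓝[>] 0) (𝓝 0) :=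
    (hBV.tendsto_eVariationOn_Icc_zero_right 0 h0.continuousWithinAt).mono_left
      (nhdsWithin_le_of_mem (Icc_mem_nhdsGT hL))
  have hsplit : ∀ᶠ δ in 𝓝[>] 0, eVariationOn f (Icc 0 L ∩ Icc (L - δ) L) +
      eVariationOn f (Icc 0 L) + eVariationOn f (Icc 0 L ∩ Icc 0 δ) =
        eVariationOn f (Icc (-δ) (L + δ)) := by
    filter_upwards [Ioc_mem_nhdsGT hL] with δ ⟨hδ₀, hδL⟩
    have hadd {a b c : ℝ} (hab : a ≤ b) (hbc : b ≤ c) :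
        eVariationOn f (Icc a b) + eVariationOn f (Icc b c) = eVariationOn f (Icc a c) := by
      simpa using eVariationOn.Icc_add_Icc f (s := univ) hab hbc (mem_univ b)
    have hshift₁ : eVariationOn f (Icc (L - δ) L) = eVariationOn f (Icc (-δ) 0) := by
      rw [← hper.eVariationOn_Icc_add_const (-δ) 0, neg_add_eq_sub, zero_add]
    have hshift₂ : eVariationOn f (Icc 0 δ) = eVariationOn f (Icc L (L + δ)) := by
      rw [← hper.eVariationOn_Icc_add_const 0 δ, zero_add, add_comm δ]
    rw [inter_eq_right.2 (Icc_subset_Icc (by linarith) le_rfl),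
      inter_eq_right.2 (Icc_subset_Icc le_rfl hδL), hshift₁, hshift₂, hadd (by linarith) hL.le,
      hadd (by linarith) (by linarith)]
  simpa using ((hleft.add tendsto_const_nhds).add hright).congr' hsplit

end PeriodicVariation

lemma exists_dyadic_mesh {L : ℝ} (hL : 0 < L) :
    ∃ (δ : ℕ → ℝ) (N : ℕ → ℕ), (∀ n, 0 < δ n) ∧ (∀ n, δ (n + 1) = δ n / 2) ∧
      (∀ n, N n * δ n = L) ∧ (∀ n : ℕ, n * δ n < 1) ∧ Tendsto δ atTop (𝓝 0) := by
  obtain ⟨M, hM⟩ := exists_nat_gt L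
  have hM₀ : (0 : ℝ) < M := hL.trans hM
  refine ⟨fun n => L / (M * 2 ^ n), fun n => M * 2 ^ n, fun n => by positivity,
    fun n => by simp only [pow_succ, div_div, mul_assoc], fun n => by push_cast; field_simp,
    fun n => ?_, tendsto_const_nhds.div_atTop
      ((tendsto_pow_atTop_atTop_of_one_lt one_lt_two).const_mul_atTop hM₀)⟩
  have hn : (n : ℝ) < 2 ^ n := by exact_mod_cast n.lt_two_pow_self
  rw [mul_div_assoc', div_lt_one (by positivity)]
  nlinarith [mul_le_mul_of_nonneg_right hn.le hL.le]

theorem approximation_from_below_general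
    (L : ℝ) (hL : 0 < L)
    (f : ℝ → ℝ)
    (hper : Function.Periodic f L)
    (hbd : ∃ C : ℝ, ∀ x : ℝ, |f x| ≤ C)
    (hBV : eVariationOn f (Set.Icc 0 L) ≠ ⊤)
    (hcont0 : ContinuousAt f 0) :
    ∃ g : ℕ → ℝ → ℝ,
      (∀ n : ℕ, 1 ≤ n → Continuous (g n) ∧ Function.Periodic (g n) L) ∧
      -- (1) monotone approximation from below
      (∀ n : ℕ, 1 ≤ n → ∀ x : ℝ, g n x ≤ g (n + 1) x ∧ g n x ≤ f x) ∧
      -- (2) convergence at continuity points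
      (∀ x : ℝ, ContinuousAt f x →
        Tendsto (fun n : ℕ => g n x) atTop (nhds (f x))) ∧
      -- (3) local minima are preserved
      (∀ x₀ : ℝ, ContinuousAt f x₀ → IsLocalMin f x₀ →
        ∀ᶠ n : ℕ in atTop, g n x₀ = f x₀) ∧
      -- (4) monotonicity is preserved in the interior of monotone intervals
      (∀ s u : ℝ, ∀ n : ℕ, 1 ≤ n → s + 3 / (n : ℝ) ≤ u - 3 / (n : ℝ) →
        (MonotoneOn f (Set.Ioo s u) →
          MonotoneOn (g n) (Set.Icc (s + 3 / (n : ℝ)) (u - 3 / (n : ℝ)))) ∧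
        (AntitoneOn f (Set.Ioo s u) →
          AntitoneOn (g n) (Set.Icc (s + 3 / (n : ℝ)) (u - 3 / (n : ℝ))))) ∧
      -- (5) asymptotic control of the total variation
      Filter.limsup (fun n : ℕ => eVariationOn (g n) (Set.Icc 0 L)) atTop ≤
        eVariationOn f (Set.Icc 0 L) := by
  obtain ⟨C, hC⟩ := hbd
  have hf : BddBelow (range f) := ⟨-C, forall_mem_range.2 fun x => neg_le_of_abs_le (hC x)⟩
  obtain ⟨δ, N, hδ, hhalf, hN, hsmall, hlim⟩ := exists_dyadic_mesh hL
  refine ⟨fun n => lowerApprox f (δ n), fun n _ => ⟨continuous_lowerApprox (hδ n), ?_⟩,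
    fun n _ x => ⟨?_, lowerApprox_le (hδ n) hf x⟩, fun x hx => tendsto_lowerApprox hδ hlim hf hx,
    fun x _ hx => hx.eventually_lowerApprox_eq hδ hlim hf, fun s u n hn _ => ?_, ?_⟩
  · simpa only [hN n] using (show Function.Periodic f (N n * δ n) by rwa [hN n]).lowerApprox (hδ n)
  · simpa only [hhalf] using lowerApprox_le_lowerApprox_half (hδ n) hf x
  · have hr : 2 * δ n < 3 / n := by
      have := hsmall n
      rw [lt_div_iff₀ (by exact_mod_cast hn)]
      linarith
    exact ⟨fun hm => monotoneOn_lowerApprox (hδ n) hf hm hr,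
      fun ha => antitoneOn_lowerApprox (hδ n) hf ha hr⟩
  · have hbound (n : ℕ) : eVariationOn (lowerApprox f (δ n)) (Icc 0 L) ≤
        eVariationOn f (Icc (-δ n) (L + δ n)) := by
      simpa only [hN n] using eVariationOn_lowerApprox_le (hδ n) hf (N n)
    have hlim' : Tendsto δ atTop (𝓝[>] 0) := tendsto_nhdsWithin_iff.2 ⟨hlim, .of_forall hδ⟩
    calc limsup (fun n => eVariationOn (lowerApprox f (δ n)) (Icc 0 L)) atTop
        ≤ limsup (fun n => eVariationOn f (Icc (-δ n) (L + δ n))) atTop :=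
          limsup_le_limsup (.of_forall hbound)
      _ = eVariationOn f (Icc 0 L) :=
          ((hper.tendsto_eVariationOn_Icc_neg_add hL hBV hcont0).comp hlim').limsup_eq

/-- Lemma 3.2 (Aprox1), lower half: a periodic, bounded, piecewise monotone BV
function which is continuous at `0` and at every local maximum point not lying in
an interval of constancy admits an increasing approximation from below by
continuous periodic functions, preserving local minima, monotonicity of pieces,
and with asymptotic control of the total variation. -/
theorem approximation_from_below
    (L : ℝ) (hL : 0 < L) (K : ℕ) (hK : 0 < K)
    (t : Fin (K + 1) → ℝ) (ht : StrictMono t)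
    (ht0 : t 0 = 0) (htK : t (Fin.last K) = L)
    (f : ℝ → ℝ)
    (hper : Function.Periodic f L)
    (hbd : ∃ C : ℝ, ∀ x : ℝ, |f x| ≤ C)
    (hBV : eVariationOn f (Set.Icc 0 L) ≠ ⊤)
    (hmono : ∀ i : Fin K,
      MonotoneOn f (Set.Icc (t i.castSucc) (t i.succ)) ∨
      AntitoneOn f (Set.Icc (t i.castSucc) (t i.succ)))
    (hcont0 : ContinuousAt f 0)
    (hcontmax : ∀ x : ℝ, IsLocalMax f x →
      (¬ ∃ u v : ℝ, u < x ∧ x < v ∧ ∀ y ∈ Set.Ioo u v, f y = f x) →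
      ContinuousAt f x) :
    ∃ g : ℕ → ℝ → ℝ,
      (∀ n : ℕ, 1 ≤ n → Continuous (g n) ∧ Function.Periodic (g n) L) ∧
      -- (1) monotone approximation from below
      (∀ n : ℕ, 1 ≤ n → ∀ x : ℝ, g n x ≤ g (n + 1) x ∧ g n x ≤ f x) ∧
      -- (2) convergence at continuity points
      (∀ x : ℝ, ContinuousAt f x →
        Tendsto (fun n : ℕ => g n x) atTop (nhds (f x))) ∧
      -- (3) local minima are preserved
      (∀ x₀ : ℝ, ContinuousAt f x₀ → IsLocalMin f x₀ →
        ∀ᶠ n : ℕ in atTop, g n x₀ = f x₀) ∧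
      -- (4) monotonicity is preserved in the interior of monotone intervals
      (∀ s u : ℝ, ∀ n : ℕ, 1 ≤ n → s + 3 / (n : ℝ) ≤ u - 3 / (n : ℝ) →
        (MonotoneOn f (Set.Ioo s u) →
          MonotoneOn (g n) (Set.Icc (s + 3 / (n : ℝ)) (u - 3 / (n : ℝ)))) ∧
        (AntitoneOn f (Set.Ioo s u) →
          AntitoneOn (g n) (Set.Icc (s + 3 / (n : ℝ)) (u - 3 / (n : ℝ))))) ∧
      -- (5) asymptotic control of the total variation
      Filter.limsup (fun n : ℕ => eVariationOn (g n) (Set.Icc 0 L)) atTop ≤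
        eVariationOn f (Set.Icc 0 L) :=
  approximation_from_below_general L hL f hper hbd hBV hcont0
end

section
/- Let L > 0, let K be a positive integer, and let 0 = t₀ < t₁ < ⋯ < t_K = L be a partition of [0, L]. Let f : ℝ → ℝ be L-periodic, bounded, of bounded variation on [0, L], monotone (nondecreasing or nonincreasing) on each interval [t_{i−1}, t_i], continuous at 0, and continuous at every point at which f attains a local minimum and which is not contained in an open interval on which f is constant. Then there exists a sequence (h_n)_{n≥1} of continuous L-periodic functions ℝ → ℝ such that: (1) h_n(x) ≥ h_{n+1}(x) ≥ f(x) for all x ∈ ℝ and all n; (2) h_n(x) → f(x) as n → ∞ at every point x at which f is continuous; (3) for every point x₀ at which f is continuous and attains a local maximum, h_n(x₀) = f(x₀) for all sufficiently large n; (4) for every open interval (s, t) on which f is monotone nondecreasing (respectively nonincreasing) and for every n with s + 3/n ≤ t − 3/n, the function h_n is monotone nondecreasing (respectively nonincreasing) on [s + 3/n, t − 3/n]; (5) limsup_{n→∞} Var(h_n; [0, L]) ≤ Var(f; [0, L]). -/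
/-!
Take `h_n = movingAverage (slidingSup f (2 w)) w` with `w = 3⁻ⁿ`: first replace `f` by its
supremum over the window of radius `2 w`, then average over the window of radius `w` to make it
continuous. Both operations are monotone and commute with translations, so they preserve
periodicity, and monotonicity on intervals shrunk by `3 w`. The sandwich
`sup_{|y - x| < w} f ≤ h_n x ≤ sup_{|y - x| < 3 w} f` gives the decay in `n`, convergence at
points of continuity and exactness at local maxima. Neither operation increases the variation
once the interval is enlarged by its radius; since `f` is continuous at `0`, hence at `L`, the
variation of `f` on `[-3 w, L + 3 w]` tends to its variation on `[0, L]`.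
-/

open Filter Set MeasureTheory Topology

lemma bddAbove_range_of_forall_abs_le {f : ℝ → ℝ} {C : ℝ} (hC : ∀ x, |f x| ≤ C) :
    BddAbove (range f) :=
  ⟨C, forall_mem_range.2 fun x ↦ (abs_le.1 (hC x)).2⟩

noncomputable def slidingSup (f : ℝ → ℝ) (r x : ℝ) : ℝ := sSup (f '' Ioo (x - r) (x + r))

section slidingSup

variable {f : ℝ → ℝ} {r r' x x' c : ℝ}

lemma le_slidingSup (hf : BddAbove (range f)) {z : ℝ} (hz : z ∈ Ioo (x - r) (x + r)) :
    f z ≤ slidingSup f r x :=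
  le_csSup (hf.mono (image_subset_range f _)) (mem_image_of_mem f hz)

lemma self_le_slidingSup (hf : BddAbove (range f)) (hr : 0 < r) : f x ≤ slidingSup f r x :=
  le_slidingSup hf ⟨by linarith, by linarith⟩

lemma slidingSup_le (hr : 0 < r) (h : ∀ z ∈ Ioo (x - r) (x + r), f z ≤ c) :
    slidingSup f r x ≤ c :=
  csSup_le ((nonempty_Ioo.2 (by linarith)).image f) (forall_mem_image.2 h)

lemma exists_slidingSup_sub_lt (hr : 0 < r) {δ : ℝ} (hδ : 0 < δ) :
    ∃ z ∈ Ioo (x - r) (x + r), slidingSup f r x - δ < f z := by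
  obtain ⟨_, ⟨z, hz, rfl⟩, hlt⟩ :=
    exists_lt_of_lt_csSup ((nonempty_Ioo.2 (by linarith : x - r < x + r)).image f)
      (sub_lt_self _ hδ)
  exact ⟨z, hz, hlt⟩

lemma slidingSup_le_slidingSup (hf : BddAbove (range f)) (hr : 0 < r)
    (h : ∀ z ∈ Ioo (x - r) (x + r), ∃ z' ∈ Ioo (x' - r') (x' + r'), f z ≤ f z') :
    slidingSup f r x ≤ slidingSup f r' x' :=
  slidingSup_le hr fun z hz ↦
    let ⟨_, hz', hle⟩ := h z hz
    hle.trans (le_slidingSup hf hz')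

lemma slidingSup_le_slidingSup_of_subset (hf : BddAbove (range f)) (hr : 0 < r)
    (h : Ioo (x - r) (x + r) ⊆ Ioo (x' - r') (x' + r')) :
    slidingSup f r x ≤ slidingSup f r' x' :=
  slidingSup_le_slidingSup hf hr fun z hz ↦ ⟨z, h hz, le_rfl⟩

lemma abs_slidingSup_le {C : ℝ} (hC : ∀ x, |f x| ≤ C) (hr : 0 < r) :
    |slidingSup f r x| ≤ C :=
  have hf := bddAbove_range_of_forall_abs_le hC
  abs_le.2 ⟨(abs_le.1 (hC x)).1.trans (self_le_slidingSup hf hr),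
    slidingSup_le hr fun z _ ↦ (abs_le.1 (hC z)).2⟩

lemma lowerSemicontinuous_slidingSup (hf : BddAbove (range f)) (hr : 0 < r) :
    LowerSemicontinuous (slidingSup f r) := by
  intro x c hc
  obtain ⟨z, hz, hcz⟩ := exists_slidingSup_sub_lt (f := f) (x := x) hr (sub_pos.2 hc)
  filter_upwards [Ioo_mem_nhds (by linarith [hz.2] : z - r < x) (by linarith [hz.1] : x < z + r)]
    with x' hx'
  exact (by linarith : c < f z).trans_le
    (le_slidingSup hf ⟨by linarith [hx'.2], by linarith [hx'.1]⟩)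

lemma intervalIntegrable_slidingSup {C : ℝ} (hC : ∀ x, |f x| ≤ C) (hr : 0 < r) (a b : ℝ) :
    IntervalIntegrable (slidingSup f r) volume a b :=
  have hf := bddAbove_range_of_forall_abs_le hC
  (IntegrableOn.of_bound measure_Icc_lt_top
    (lowerSemicontinuous_slidingSup hf hr).measurable.aestronglyMeasurable C
    (ae_of_all _ fun _ ↦ abs_slidingSup_le hC hr)).intervalIntegrable

lemma Function.Periodic.slidingSup {L : ℝ} (hper : Function.Periodic f L) (r : ℝ) :
    Function.Periodic (slidingSup f r) L := by
  intro x
  unfold _root_.slidingSup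
  rw [show x + L - r = x - r + L by ring, show x + L + r = x + r + L by ring,
    ← image_add_const_Ioo, image_image, show (fun y ↦ f (y + L)) = f from funext hper]

lemma ContinuousAt.tendsto_slidingSup (hf : BddAbove (range f)) (hx : ContinuousAt f x) :
    Tendsto (fun r ↦ slidingSup f r x) (𝓝[>] 0) (𝓝 (f x)) := by
  refine tendsto_order.2 ⟨fun c hc ↦ ?_, fun c hc ↦ ?_⟩
  · filter_upwards [self_mem_nhdsWithin] with r hr using hc.trans_le (self_le_slidingSup hf hr)
  · obtain ⟨c', hxc', hc'c⟩ := exists_between hc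
    obtain ⟨ε, hε, hball⟩ := Metric.eventually_nhds_iff.1 (hx.eventually (gt_mem_nhds hxc'))
    filter_upwards [Ioo_mem_nhdsGT hε] with r hr
    refine (slidingSup_le hr.1 fun z hz ↦ (hball ?_).le).trans_lt hc'c
    rw [Real.dist_eq, abs_lt]
    constructor <;> linarith [hz.1, hz.2, hr.2]

lemma IsLocalMax.eventually_slidingSup_eq (hmax : IsLocalMax f x) (hf : BddAbove (range f)) :
    ∀ᶠ r in 𝓝[>] 0, slidingSup f r x = f x := by
  obtain ⟨ε, hε, hball⟩ := Metric.eventually_nhds_iff.1 hmax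
  filter_upwards [Ioo_mem_nhdsGT hε] with r hr
  refine le_antisymm (slidingSup_le hr.1 fun z hz ↦ hball ?_) (self_le_slidingSup hf hr.1)
  rw [Real.dist_eq, abs_lt]
  constructor <;> linarith [hz.1, hz.2, hr.2]

lemma MonotoneOn.slidingSup {s u : ℝ} (hmono : MonotoneOn f (Ioo s u)) (hf : BddAbove (range f))
    (hr : 0 < r) : MonotoneOn (slidingSup f r) (Icc (s + r) (u - r)) := by
  intro x hx x' hx' hxx'
  refine slidingSup_le_slidingSup hf hr fun z hz ↦
    ⟨z + (x' - x), ⟨by linarith [hz.1], by linarith [hz.2]⟩, ?_⟩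
  exact hmono ⟨by linarith [hx.1, hz.1], by linarith [hx.2, hz.2]⟩
    ⟨by linarith [hx'.1, hz.1], by linarith [hx'.2, hz.2]⟩ (by linarith)

lemma AntitoneOn.slidingSup {s u : ℝ} (hanti : AntitoneOn f (Ioo s u)) (hf : BddAbove (range f))
    (hr : 0 < r) : AntitoneOn (slidingSup f r) (Icc (s + r) (u - r)) := by
  intro x hx x' hx' hxx'
  refine slidingSup_le_slidingSup hf hr fun z hz ↦
    ⟨z - (x' - x), ⟨by linarith [hz.1], by linarith [hz.2]⟩, ?_⟩
  exact hanti ⟨by linarith [hx.1, hz.1], by linarith [hx.2, hz.2]⟩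
    ⟨by linarith [hx'.1, hz.1], by linarith [hx'.2, hz.2]⟩ (by linarith)

end slidingSup

section eVariationOn

open scoped ENNReal

variable {f : ℝ → ℝ} {a b L : ℝ}

lemma sum_edist_eq_ofReal_sum_abs (g : ℝ → ℝ) (u : ℕ → ℝ) (m : ℕ) :
    ∑ i ∈ Finset.range m, edist (g (u (i + 1))) (g (u i)) =
      ENNReal.ofReal (∑ i ∈ Finset.range m, |g (u (i + 1)) - g (u i)|) := by
  rw [ENNReal.ofReal_sum_of_nonneg fun i _ ↦ abs_nonneg _]
  simp only [edist_dist, Real.dist_eq]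

lemma sum_abs_sub_le_toReal_eVariationOn {g : ℝ → ℝ} {s : Set ℝ}
    (hg : eVariationOn g s ≠ ⊤) {u : ℕ → ℝ} (hu : Monotone u) (us : ∀ i, u i ∈ s)
    (m : ℕ) :
    ∑ i ∈ Finset.range m, |g (u (i + 1)) - g (u i)| ≤ (eVariationOn g s).toReal := by
  rw [← ENNReal.ofReal_le_iff_le_toReal hg, ← sum_edist_eq_ofReal_sum_abs]
  exact eVariationOn.sum_le hu us

lemma eVariationOn_le_of_forall_sum_le {g : ℝ → ℝ} {s : Set ℝ} {V : ℝ≥0∞} (hV : V ≠ ⊤)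
    (h : ∀ m (u : ℕ → ℝ), Monotone u → (∀ i, u i ∈ s) →
      ∑ i ∈ Finset.range m, |g (u (i + 1)) - g (u i)| ≤ V.toReal) :
    eVariationOn g s ≤ V := by
  refine iSup_le fun ⟨m, u, hu, us⟩ ↦ ?_
  rw [sum_edist_eq_ofReal_sum_abs, ENNReal.ofReal_le_iff_le_toReal hV]
  exact h m u hu us

lemma eVariationOn_Icc_add_Icc (f : ℝ → ℝ) {c : ℝ} (hab : a ≤ b) (hbc : b ≤ c) :
    eVariationOn f (Icc a b) + eVariationOn f (Icc b c) = eVariationOn f (Icc a c) := by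
  simpa using eVariationOn.Icc_add_Icc f (s := univ) hab hbc (mem_univ b)

lemma Function.Periodic.eVariationOn_Icc_add (hper : Function.Periodic f L) (a b : ℝ) :
    eVariationOn f (Icc (a + L) (b + L)) = eVariationOn f (Icc a b) := by
  have h := eVariationOn.comp_eq_of_monotoneOn f (· + L)
    ((monotone_id.add_const L).monotoneOn (Icc a b))
  rwa [show f ∘ (· + L) = f from funext hper, image_add_const_Icc, eq_comm] at h

lemma Function.Periodic.continuousAt_add (hper : Function.Periodic f L) {x : ℝ}
    (hx : ContinuousAt f x) : ContinuousAt f (x + L) := by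
  have h := ContinuousAt.comp (x := x + L) (f := (· - L)) (by rwa [add_sub_cancel_right])
    (continuous_sub_right L).continuousAt
  rwa [show f ∘ (· - L) = f from funext hper.sub_eq] at h

lemma Function.Periodic.boundedVariationOn_Icc (hper : Function.Periodic f L) (hL : 0 ≤ L)
    (hf : BoundedVariationOn f (Icc 0 L)) : BoundedVariationOn f (Icc (0 - L) (L + L)) := by
  have hleft := hper.eVariationOn_Icc_add (0 - L) 0
  have hright := hper.eVariationOn_Icc_add 0 L
  rw [sub_add_cancel, zero_add] at hleft
  rw [zero_add] at hright
  rw [BoundedVariationOn, ← eVariationOn_Icc_add_Icc f (by linarith : 0 - L ≤ 0) (by linarith),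
    ← eVariationOn_Icc_add_Icc f hL (by linarith), ← hleft, hright]
  exact ENNReal.add_ne_top.2 ⟨hf, ENNReal.add_ne_top.2 ⟨hf, hf⟩⟩

lemma tendsto_eVariationOn_Icc_sub_add {δ : ℝ} (hab : a ≤ b) (hδ : 0 < δ)
    (hf : BoundedVariationOn f (Icc (a - δ) (b + δ))) (ha : ContinuousAt f a)
    (hb : ContinuousAt f b) :
    Tendsto (fun ρ ↦ eVariationOn f (Icc (a - ρ) (b + ρ))) (𝓝[>] 0)
      (𝓝 (eVariationOn f (Icc a b))) := by
  set s := Icc (a - δ) (b + δ)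
  have hleft : Tendsto (fun ρ ↦ eVariationOn f (s ∩ Icc (a - ρ) a)) (𝓝[>] 0) (𝓝 0) := by
    refine (hf.tendsto_eVariationOn_Icc_zero_left ha.continuousWithinAt).comp ?_
    rw [nhdsWithin_eq_nhds.2 (Icc_mem_nhds (by linarith) (by linarith))]
    exact ((continuous_sub_left a).tendsto' 0 a (sub_zero a)).mono_left nhdsWithin_le_nhds
  have hright :
      Tendsto (fun ρ ↦ eVariationOn f (s ∩ Icc b (b + ρ))) (𝓝[>] 0) (𝓝 0) := by
    refine (hf.tendsto_eVariationOn_Icc_zero_right b hb.continuousWithinAt).comp ?_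
    rw [nhdsWithin_eq_nhds.2 (Icc_mem_nhds (by linarith) (by linarith))]
    exact ((continuous_const_add b).tendsto' 0 b (add_zero b)).mono_left nhdsWithin_le_nhds
  simpa using ((hleft.add_const (eVariationOn f (Icc a b))).add hright).congr' <| by
    filter_upwards [Ioo_mem_nhdsGT hδ] with ρ hρ
    rw [inter_eq_right.2 (Icc_subset_Icc (by linarith [hρ.2]) (by linarith)),
      inter_eq_right.2 (Icc_subset_Icc (by linarith) (by linarith [hρ.2])),
      eVariationOn_Icc_add_Icc f (by linarith [hρ.1]) hab,
      eVariationOn_Icc_add_Icc f (by linarith [hρ.1]) (by linarith [hρ.1])]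

end eVariationOn

section slidingSupVariation

variable {f φ : ℝ → ℝ} {r a b δ : ℝ}

/-- The sliding supremum is controlled by a greedy choice of near-maximisers `z`: the increment
`|slidingSup f r x' - slidingSup f r x|` is paid, up to `2 δ`, by the decrease of the potential
`slidingSup f r x - f z - φ z`. -/
lemma slidingSup_anchor_step (hf : BddAbove (range f)) (hr : 0 < r)
    (hφ : ∀ z ∈ Icc (a - r) (b + r), ∀ z' ∈ Icc (a - r) (b + r), z ≤ z' →
      |f z' - f z| ≤ φ z' - φ z)
    (hδ : 0 < δ) {x x' z : ℝ} (hxx' : x ≤ x') (hx' : x' ∈ Icc a b)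
    (hz : z ∈ Icc (a - r) (b + r)) (hzx : z < x + r) (hfz : f z ≤ slidingSup f r x) :
    ∃ z' ∈ Icc (a - r) (b + r), z' < x' + r ∧ f z' ≤ slidingSup f r x' ∧
      |slidingSup f r x' - slidingSup f r x| + (slidingSup f r x' - f z' - φ z') ≤
        slidingSup f r x - f z - φ z + 2 * δ := by
  set M := slidingSup f r
  rcases le_or_gt (M x') (M x) with hdown | hup
  · rw [abs_of_nonpos (sub_nonpos.2 hdown)]
    rcases le_or_gt z x' with hzx' | hx'z
    · have hx'S : x' ∈ Icc (a - r) (b + r) := ⟨by linarith [hx'.1], by linarith [hx'.2]⟩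
      have := (le_abs_self _).trans (abs_sub_comm (f z) (f x') ▸ hφ z hz x' hx'S hzx')
      exact ⟨x', hx'S, by linarith, self_le_slidingSup hf hr, by linarith⟩
    · exact ⟨z, hz, by linarith, le_slidingSup hf ⟨by linarith, by linarith⟩, by linarith⟩
  · rw [abs_of_pos (sub_pos.2 hup)]
    obtain ⟨z₁, hz₁, hMz₁⟩ := exists_slidingSup_sub_lt (f := f) (x := x') hr hδ
    rcases lt_or_ge z z₁ with hzz₁ | hz₁z
    · have hz₁S : z₁ ∈ Icc (a - r) (b + r) :=
        ⟨by linarith [hx'.1, hz₁.1], by linarith [hx'.2, hz₁.2]⟩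
      have := (le_abs_self _).trans (hφ z hz z₁ hz₁S hzz₁.le)
      exact ⟨z₁, hz₁S, hz₁.2, le_slidingSup hf hz₁, by linarith⟩
    · have : f z₁ ≤ M x := le_slidingSup hf ⟨by linarith [hz₁.1], by linarith⟩
      exact ⟨z, hz, by linarith, by linarith, by linarith⟩

lemma exists_slidingSup_anchor (hf : BddAbove (range f)) (hr : 0 < r)
    (hφ : ∀ z ∈ Icc (a - r) (b + r), ∀ z' ∈ Icc (a - r) (b + r), z ≤ z' →
      |f z' - f z| ≤ φ z' - φ z)
    (hδ : 0 < δ) {u : ℕ → ℝ} (hu : Monotone u) (hus : ∀ i, u i ∈ Icc a b) (k : ℕ) :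
    ∃ z ∈ Icc (a - r) (b + r), z < u k + r ∧ f z ≤ slidingSup f r (u k) ∧
      ∑ i ∈ Finset.range k, |slidingSup f r (u (i + 1)) - slidingSup f r (u i)| +
        (slidingSup f r (u k) - f z - φ z) ≤ (2 * k + 1) * δ - φ (a - r) := by
  induction k with
  | zero =>
    obtain ⟨z, hz, hMz⟩ := exists_slidingSup_sub_lt (f := f) (x := u 0) hr hδ
    have hzS : z ∈ Icc (a - r) (b + r) :=
      ⟨by linarith [(hus 0).1, hz.1], by linarith [(hus 0).2, hz.2]⟩
    have haS : a - r ∈ Icc (a - r) (b + r) := ⟨le_rfl, hzS.1.trans hzS.2⟩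
    have := (abs_nonneg _).trans (hφ _ haS z hzS hzS.1)
    refine ⟨z, hzS, hz.2, le_slidingSup hf hz, ?_⟩
    simp only [Finset.range_zero, Finset.sum_empty, CharP.cast_eq_zero]
    linarith
  | succ k ih =>
    obtain ⟨z, hz, hzu, hfz, hsum⟩ := ih
    obtain ⟨z', hz', hz'u, hfz', hstep⟩ :=
      slidingSup_anchor_step hf hr hφ hδ (hu k.le_succ) (hus (k + 1)) hz hzu hfz
    refine ⟨z', hz', hz'u, hfz', ?_⟩
    rw [Finset.sum_range_succ]
    push_cast
    linarith

lemma sum_abs_sub_slidingSup_le (hf : BddAbove (range f)) (hr : 0 < r)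
    (hφ : ∀ z ∈ Icc (a - r) (b + r), ∀ z' ∈ Icc (a - r) (b + r), z ≤ z' →
      |f z' - f z| ≤ φ z' - φ z)
    {u : ℕ → ℝ} (hu : Monotone u) (hus : ∀ i, u i ∈ Icc a b) (m : ℕ) :
    ∑ i ∈ Finset.range m, |slidingSup f r (u (i + 1)) - slidingSup f r (u i)| ≤
      φ (b + r) - φ (a - r) := by
  refine le_of_forall_pos_le_add fun ε hε ↦ ?_
  obtain ⟨z, hz, -, hfz, hsum⟩ :=
    exists_slidingSup_anchor hf hr hφ (δ := ε / (2 * m + 1)) (by positivity) hu hus m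
  have hbS : b + r ∈ Icc (a - r) (b + r) := ⟨hz.1.trans hz.2, le_rfl⟩
  have := (abs_nonneg _).trans (hφ z hz _ hbS hz.2)
  have hε' : (2 * m + 1) * (ε / (2 * m + 1)) = ε := by field_simp
  linarith

lemma eVariationOn_slidingSup_le (hf : BddAbove (range f)) (hr : 0 < r) :
    eVariationOn (slidingSup f r) (Icc a b) ≤ eVariationOn f (Icc (a - r) (b + r)) := by
  set S := Icc (a - r) (b + r)
  rcases eq_top_or_lt_top (eVariationOn f S) with htop | hfin
  · exact htop ▸ le_top
  have hBV : BoundedVariationOn f S := hfin.ne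
  refine eVariationOn_le_of_forall_sum_le hfin.ne fun m u hu hus ↦ ?_
  refine (sum_abs_sub_slidingSup_le hf hr (φ := variationOnFromTo f S (a - r))
    (fun z hz z' hz' hzz' ↦ ?_) hu hus m).trans ?_
  · exact variationOnFromTo.abs_sub_le_sub_of_le hBV.locallyBoundedVariationOn
      ⟨le_rfl, hz.1.trans hz.2⟩ hz hz' hzz'
  · rw [variationOnFromTo.self, sub_zero]
    exact (le_abs_self _).trans (variationOnFromTo.abs_le_eVariationOn hBV)

end slidingSupVariation

noncomputable def movingAverage (g : ℝ → ℝ) (d x : ℝ) : ℝ :=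
  (2 * d)⁻¹ * ∫ y in (x - d)..(x + d), g y

section movingAverage

variable {g g' : ℝ → ℝ} {d x x' : ℝ}

lemma intervalIntegrable_comp_const_add (hg : ∀ a b, IntervalIntegrable g volume a b)
    (c a b : ℝ) : IntervalIntegrable (fun y ↦ g (c + y)) volume a b := by
  simpa using (hg (c + a) (c + b)).comp_add_left c

lemma movingAverage_eq_integral_comp_add (g : ℝ → ℝ) (d x : ℝ) :
    movingAverage g d x = (2 * d)⁻¹ * ∫ y in (-d)..d, g (x + y) := by
  rw [movingAverage, intervalIntegral.integral_comp_add_left, ← sub_eq_add_neg]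

lemma movingAverage_const (hd : d ≠ 0) (c : ℝ) : movingAverage (fun _ ↦ c) d x = c := by
  rw [movingAverage, intervalIntegral.integral_const, smul_eq_mul, ← mul_assoc]
  field_simp
  ring

lemma movingAverage_le_movingAverage (hg : ∀ a b, IntervalIntegrable g volume a b)
    (hg' : ∀ a b, IntervalIntegrable g' volume a b) (hd : 0 < d)
    (h : ∀ y ∈ Icc (-d) d, g (x + y) ≤ g' (x' + y)) :
    movingAverage g d x ≤ movingAverage g' d x' := by
  rw [movingAverage_eq_integral_comp_add, movingAverage_eq_integral_comp_add]
  gcongr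
  exact intervalIntegral.integral_mono_on (by linarith) (intervalIntegrable_comp_const_add hg x _ _)
    (intervalIntegrable_comp_const_add hg' x' _ _) h

lemma continuous_movingAverage (hg : ∀ a b, IntervalIntegrable g volume a b) (d : ℝ) :
    Continuous (movingAverage g d) := by
  have hF := intervalIntegral.continuous_primitive hg 0
  have : movingAverage g d = fun x ↦
      (2 * d)⁻¹ * ((∫ y in (0 : ℝ)..(x + d), g y) - ∫ y in (0 : ℝ)..(x - d), g y) := by
    ext x
    rw [movingAverage, intervalIntegral.integral_interval_sub_left (hg _ _) (hg _ _)]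
  rw [this]
  fun_prop

lemma Function.Periodic.movingAverage {L : ℝ} (hper : Function.Periodic g L) (d : ℝ) :
    Function.Periodic (movingAverage g d) L := by
  intro x
  simp only [movingAverage_eq_integral_comp_add, add_right_comm x L, hper _]

lemma MonotoneOn.movingAverage {s u : ℝ} (hmono : MonotoneOn g (Icc s u))
    (hg : ∀ a b, IntervalIntegrable g volume a b) (hd : 0 < d) :
    MonotoneOn (movingAverage g d) (Icc (s + d) (u - d)) := by
  intro x hx x' hx' hxx'
  refine movingAverage_le_movingAverage hg hg hd fun y hy ↦ hmono ?_ ?_ (by linarith)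
  · exact ⟨by linarith [hx.1, hy.1], by linarith [hx.2, hy.2]⟩
  · exact ⟨by linarith [hx'.1, hy.1], by linarith [hx'.2, hy.2]⟩

lemma AntitoneOn.movingAverage {s u : ℝ} (hanti : AntitoneOn g (Icc s u))
    (hg : ∀ a b, IntervalIntegrable g volume a b) (hd : 0 < d) :
    AntitoneOn (movingAverage g d) (Icc (s + d) (u - d)) := by
  intro x hx x' hx' hxx'
  refine movingAverage_le_movingAverage hg hg hd fun y hy ↦ hanti ?_ ?_ (by linarith)
  · exact ⟨by linarith [hx.1, hy.1], by linarith [hx.2, hy.2]⟩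
  · exact ⟨by linarith [hx'.1, hy.1], by linarith [hx'.2, hy.2]⟩

lemma abs_sub_movingAverage_le (hg : ∀ a b, IntervalIntegrable g volume a b) (hd : 0 < d) :
    |movingAverage g d x' - movingAverage g d x| ≤
      (2 * d)⁻¹ * ∫ y in (-d)..d, |g (x' + y) - g (x + y)| := by
  rw [movingAverage_eq_integral_comp_add, movingAverage_eq_integral_comp_add, ← mul_sub, abs_mul,
    abs_of_pos (by positivity : 0 < (2 * d)⁻¹), ← intervalIntegral.integral_sub
      (intervalIntegrable_comp_const_add hg x' _ _)
      (intervalIntegrable_comp_const_add hg x _ _)]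
  gcongr
  exact intervalIntegral.abs_integral_le_integral_abs (by linarith)

lemma eVariationOn_movingAverage_le (hg : ∀ a b, IntervalIntegrable g volume a b) (hd : 0 < d)
    {a b : ℝ} :
    eVariationOn (movingAverage g d) (Icc a b) ≤ eVariationOn g (Icc (a - d) (b + d)) := by
  rcases eq_top_or_lt_top (eVariationOn g (Icc (a - d) (b + d))) with htop | hfin
  · exact htop ▸ le_top
  refine eVariationOn_le_of_forall_sum_le hfin.ne fun m u hu hus ↦ ?_
  set V := (eVariationOn g (Icc (a - d) (b + d))).toReal
  have hint (i : ℕ) :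
      IntervalIntegrable (fun y ↦ |g (u (i + 1) + y) - g (u i + y)|) volume (-d) d :=
    ((intervalIntegrable_comp_const_add hg _ _ _).sub
      (intervalIntegrable_comp_const_add hg _ _ _)).abs
  have hpoint :
      ∀ y ∈ Icc (-d) d, ∑ i ∈ Finset.range m, |g (u (i + 1) + y) - g (u i + y)| ≤ V :=
    fun y hy ↦ sum_abs_sub_le_toReal_eVariationOn (g := g) hfin.ne (hu.add_const y)
      (fun i ↦ ⟨by linarith [(hus i).1, hy.1], by linarith [(hus i).2, hy.2]⟩) m
  calc ∑ i ∈ Finset.range m, |movingAverage g d (u (i + 1)) - movingAverage g d (u i)|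
      ≤ ∑ i ∈ Finset.range m,
          (2 * d)⁻¹ * ∫ y in (-d)..d, |g (u (i + 1) + y) - g (u i + y)| :=
        Finset.sum_le_sum fun i _ ↦ abs_sub_movingAverage_le hg hd
    _ = (2 * d)⁻¹ *
          ∫ y in (-d)..d, ∑ i ∈ Finset.range m, |g (u (i + 1) + y) - g (u i + y)| := by
        rw [intervalIntegral.integral_finsetSum fun i _ ↦ hint i, Finset.mul_sum]
    _ ≤ (2 * d)⁻¹ * ∫ _ in (-d)..d, V := by
        gcongr
        exact intervalIntegral.integral_mono_on (by linarith)
          (by simpa only [Finset.sum_fn] using IntervalIntegrable.sum _ fun i _ ↦ hint i)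
          intervalIntegrable_const hpoint
    _ = V := by
        rw [intervalIntegral.integral_const, smul_eq_mul]
        field_simp
        ring

end movingAverage

lemma tendsto_const_mul_nhdsGT_zero {c : ℝ} (hc : 0 < c) :
    Tendsto (fun w : ℝ ↦ c * w) (𝓝[>] 0) (𝓝[>] 0) :=
  tendsto_nhdsWithin_iff.2
    ⟨((continuous_const_mul c).tendsto' 0 0 (mul_zero c)).mono_left nhdsWithin_le_nhds,
      eventually_nhdsWithin_of_forall fun _ hw ↦ mul_pos hc hw⟩

noncomputable def upperApprox (f : ℝ → ℝ) (w : ℝ) : ℝ → ℝ :=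
  movingAverage (slidingSup f (2 * w)) w

section upperApprox

variable {f : ℝ → ℝ} {C w w' x : ℝ}

lemma continuous_upperApprox (hC : ∀ x, |f x| ≤ C) (hw : 0 < w) :
    Continuous (upperApprox f w) :=
  continuous_movingAverage (intervalIntegrable_slidingSup hC (by positivity)) w

lemma Function.Periodic.upperApprox {L : ℝ} (hper : Function.Periodic f L) (w : ℝ) :
    Function.Periodic (upperApprox f w) L :=
  (hper.slidingSup _).movingAverage w

lemma slidingSup_le_upperApprox (hC : ∀ x, |f x| ≤ C) (hw : 0 < w) :
    slidingSup f w x ≤ upperApprox f w x := calc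
  slidingSup f w x = movingAverage (fun _ ↦ slidingSup f w x) w x :=
    (movingAverage_const hw.ne' _).symm
  _ ≤ upperApprox f w x :=
    movingAverage_le_movingAverage (fun _ _ ↦ intervalIntegrable_const)
      (intervalIntegrable_slidingSup hC (by positivity)) hw fun y hy ↦
        slidingSup_le_slidingSup_of_subset (bddAbove_range_of_forall_abs_le hC) hw
          (Ioo_subset_Ioo (by linarith [hy.2]) (by linarith [hy.1]))

lemma upperApprox_le_slidingSup (hC : ∀ x, |f x| ≤ C) (hw : 0 < w) :
    upperApprox f w x ≤ slidingSup f (3 * w) x := calc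
  upperApprox f w x ≤ movingAverage (fun _ ↦ slidingSup f (3 * w) x) w x :=
    movingAverage_le_movingAverage (intervalIntegrable_slidingSup hC (by positivity))
      (fun _ _ ↦ intervalIntegrable_const) hw fun y hy ↦
        slidingSup_le_slidingSup_of_subset (bddAbove_range_of_forall_abs_le hC) (by positivity)
          (Ioo_subset_Ioo (by linarith [hy.1]) (by linarith [hy.2]))
  _ = slidingSup f (3 * w) x := movingAverage_const hw.ne' _

lemma self_le_upperApprox (hC : ∀ x, |f x| ≤ C) (hw : 0 < w) : f x ≤ upperApprox f w x :=
  (self_le_slidingSup (bddAbove_range_of_forall_abs_le hC) hw).trans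
    (slidingSup_le_upperApprox hC hw)

lemma upperApprox_le_upperApprox (hC : ∀ x, |f x| ≤ C) (hw' : 0 < w') (hww' : 3 * w' ≤ w) :
    upperApprox f w' x ≤ upperApprox f w x := calc
  upperApprox f w' x ≤ slidingSup f (3 * w') x := upperApprox_le_slidingSup hC hw'
  _ ≤ slidingSup f w x :=
    slidingSup_le_slidingSup_of_subset (bddAbove_range_of_forall_abs_le hC) (by positivity)
      (Ioo_subset_Ioo (by linarith) (by linarith))
  _ ≤ upperApprox f w x := slidingSup_le_upperApprox hC (by linarith)

lemma ContinuousAt.tendsto_upperApprox (hx : ContinuousAt f x) (hC : ∀ x, |f x| ≤ C) :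
    Tendsto (fun w ↦ upperApprox f w x) (𝓝[>] 0) (𝓝 (f x)) :=
  tendsto_of_tendsto_of_tendsto_of_le_of_le' tendsto_const_nhds
    ((hx.tendsto_slidingSup (bddAbove_range_of_forall_abs_le hC)).comp
      (tendsto_const_mul_nhdsGT_zero three_pos))
    (eventually_nhdsWithin_of_forall fun _ hw ↦ self_le_upperApprox hC hw)
    (eventually_nhdsWithin_of_forall fun _ hw ↦ upperApprox_le_slidingSup hC hw)

lemma IsLocalMax.eventually_upperApprox_eq (hmax : IsLocalMax f x) (hC : ∀ x, |f x| ≤ C) :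
    ∀ᶠ w in 𝓝[>] 0, upperApprox f w x = f x := by
  filter_upwards [(tendsto_const_mul_nhdsGT_zero three_pos).eventually
    (hmax.eventually_slidingSup_eq (bddAbove_range_of_forall_abs_le hC)), self_mem_nhdsWithin]
    with w hsup hw
  exact le_antisymm (hsup ▸ upperApprox_le_slidingSup hC hw) (self_le_upperApprox hC hw)

lemma MonotoneOn.upperApprox {s u : ℝ} (hmono : MonotoneOn f (Ioo s u)) (hC : ∀ x, |f x| ≤ C)
    (hw : 0 < w) : MonotoneOn (upperApprox f w) (Icc (s + 3 * w) (u - 3 * w)) :=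
  ((hmono.slidingSup (bddAbove_range_of_forall_abs_le hC) (by positivity)).movingAverage
    (intervalIntegrable_slidingSup hC (by positivity)) hw).mono
    (Icc_subset_Icc (by linarith) (by linarith))

lemma AntitoneOn.upperApprox {s u : ℝ} (hanti : AntitoneOn f (Ioo s u)) (hC : ∀ x, |f x| ≤ C)
    (hw : 0 < w) : AntitoneOn (upperApprox f w) (Icc (s + 3 * w) (u - 3 * w)) :=
  ((hanti.slidingSup (bddAbove_range_of_forall_abs_le hC) (by positivity)).movingAverage
    (intervalIntegrable_slidingSup hC (by positivity)) hw).mono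
    (Icc_subset_Icc (by linarith) (by linarith))

lemma eVariationOn_upperApprox_le (hC : ∀ x, |f x| ≤ C) (hw : 0 < w) {a b : ℝ} :
    eVariationOn (upperApprox f w) (Icc a b) ≤
      eVariationOn f (Icc (a - 3 * w) (b + 3 * w)) := calc
  eVariationOn (upperApprox f w) (Icc a b)
      ≤ eVariationOn (slidingSup f (2 * w)) (Icc (a - w) (b + w)) :=
    eVariationOn_movingAverage_le (intervalIntegrable_slidingSup hC (by positivity)) hw
  _ ≤ eVariationOn f (Icc (a - w - 2 * w) (b + w + 2 * w)) :=
    eVariationOn_slidingSup_le (bddAbove_range_of_forall_abs_le hC) (by positivity)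
  _ = eVariationOn f (Icc (a - 3 * w) (b + 3 * w)) := by ring_nf

end upperApprox

lemma three_mul_inv_three_pow_le_div {n : ℕ} (hn : 1 ≤ n) :
    3 * (3 : ℝ)⁻¹ ^ n ≤ 3 / n := by
  rw [inv_pow, ← div_eq_mul_inv]
  exact div_le_div_of_nonneg_left (by norm_num) (by exact_mod_cast hn)
    (by exact_mod_cast (Nat.lt_pow_self (by norm_num)).le)

theorem approximation_from_above_general
    (L : ℝ) (hL : 0 < L)
    (f : ℝ → ℝ)
    (hper : Function.Periodic f L)
    (hbd : ∃ C : ℝ, ∀ x : ℝ, |f x| ≤ C)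
    (hBV : eVariationOn f (Set.Icc 0 L) ≠ ⊤)
    (hcont0 : ContinuousAt f 0) :
    ∃ h : ℕ → ℝ → ℝ,
      (∀ n : ℕ, 1 ≤ n → Continuous (h n) ∧ Function.Periodic (h n) L) ∧
      -- (1) monotone approximation from above
      (∀ n : ℕ, 1 ≤ n → ∀ x : ℝ, h (n + 1) x ≤ h n x ∧ f x ≤ h n x) ∧
      -- (2) convergence at continuity points
      (∀ x : ℝ, ContinuousAt f x →
        Tendsto (fun n : ℕ => h n x) atTop (nhds (f x))) ∧
      -- (3) local maxima are preserved
      (∀ x₀ : ℝ, ContinuousAt f x₀ → IsLocalMax f x₀ →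
        ∀ᶠ n : ℕ in atTop, h n x₀ = f x₀) ∧
      -- (4) monotonicity is preserved in the interior of monotone intervals
      (∀ s u : ℝ, ∀ n : ℕ, 1 ≤ n → s + 3 / (n : ℝ) ≤ u - 3 / (n : ℝ) →
        (MonotoneOn f (Set.Ioo s u) →
          MonotoneOn (h n) (Set.Icc (s + 3 / (n : ℝ)) (u - 3 / (n : ℝ)))) ∧
        (AntitoneOn f (Set.Ioo s u) →
          AntitoneOn (h n) (Set.Icc (s + 3 / (n : ℝ)) (u - 3 / (n : ℝ))))) ∧
      -- (5) asymptotic control of the total variation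
      Filter.limsup (fun n : ℕ => eVariationOn (h n) (Set.Icc 0 L)) atTop ≤
        eVariationOn f (Set.Icc 0 L) := by
  obtain ⟨C, hC⟩ := hbd
  set w : ℕ → ℝ := fun n ↦ (3 : ℝ)⁻¹ ^ n
  have hw (n : ℕ) : 0 < w n := by positivity
  have hw_tendsto : Tendsto w atTop (𝓝[>] 0) := tendsto_nhdsWithin_iff.2
    ⟨tendsto_pow_atTop_nhds_zero_of_lt_one (by norm_num) (by norm_num), .of_forall hw⟩
  have hwindow {s u : ℝ} {n : ℕ} (hn : 1 ≤ n) :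
      Icc (s + 3 / (n : ℝ)) (u - 3 / (n : ℝ)) ⊆ Icc (s + 3 * w n) (u - 3 * w n) :=
    have : 3 * w n ≤ 3 / n := three_mul_inv_three_pow_le_div hn
    Icc_subset_Icc (by linarith) (by linarith)
  refine ⟨fun n ↦ upperApprox f (w n),
    fun n _ ↦ ⟨continuous_upperApprox hC (hw n), hper.upperApprox _⟩,
    fun n _ x ↦ ⟨upperApprox_le_upperApprox hC (hw _) (by simp only [w, pow_succ]; linarith),
      self_le_upperApprox hC (hw n)⟩,
    fun x hx ↦ (hx.tendsto_upperApprox hC).comp hw_tendsto,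
    fun x _ hmax ↦ hw_tendsto.eventually (hmax.eventually_upperApprox_eq hC),
    fun s u n hn _ ↦ ⟨fun hmono ↦ (hmono.upperApprox hC (hw n)).mono (hwindow hn),
      fun hanti ↦ (hanti.upperApprox hC (hw n)).mono (hwindow hn)⟩, ?_⟩
  have hvar := tendsto_eVariationOn_Icc_sub_add hL.le hL
    (hper.boundedVariationOn_Icc hL.le hBV) hcont0 (by simpa using hper.continuousAt_add hcont0)
  calc limsup (fun n ↦ eVariationOn (upperApprox f (w n)) (Icc 0 L)) atTop
      ≤ limsup (fun n ↦ eVariationOn f (Icc (0 - 3 * w n) (L + 3 * w n))) atTop :=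
        limsup_le_limsup (.of_forall fun n ↦ eVariationOn_upperApprox_le hC (hw n))
    _ = eVariationOn f (Icc 0 L) :=
        (hvar.comp ((tendsto_const_mul_nhdsGT_zero three_pos).comp hw_tendsto)).limsup_eq

/-- Lemma 3.2 (Aprox1), upper half: a periodic, bounded, piecewise monotone BV
function which is continuous at `0` and at every local minimum point not lying in
an interval of constancy admits a decreasing approximation from above by
continuous periodic functions, preserving local maxima, monotonicity of pieces,
and with asymptotic control of the total variation. -/
theorem approximation_from_above
    (L : ℝ) (hL : 0 < L) (K : ℕ) (hK : 0 < K)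
    (t : Fin (K + 1) → ℝ) (ht : StrictMono t)
    (ht0 : t 0 = 0) (htK : t (Fin.last K) = L)
    (f : ℝ → ℝ)
    (hper : Function.Periodic f L)
    (hbd : ∃ C : ℝ, ∀ x : ℝ, |f x| ≤ C)
    (hBV : eVariationOn f (Set.Icc 0 L) ≠ ⊤)
    (hmono : ∀ i : Fin K,
      MonotoneOn f (Set.Icc (t i.castSucc) (t i.succ)) ∨
      AntitoneOn f (Set.Icc (t i.castSucc) (t i.succ)))
    (hcont0 : ContinuousAt f 0)
    (hcontmin : ∀ x : ℝ, IsLocalMin f x →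
      (¬ ∃ u v : ℝ, u < x ∧ x < v ∧ ∀ y ∈ Set.Ioo u v, f y = f x) →
      ContinuousAt f x) :
    ∃ h : ℕ → ℝ → ℝ,
      (∀ n : ℕ, 1 ≤ n → Continuous (h n) ∧ Function.Periodic (h n) L) ∧
      -- (1) monotone approximation from above
      (∀ n : ℕ, 1 ≤ n → ∀ x : ℝ, h (n + 1) x ≤ h n x ∧ f x ≤ h n x) ∧
      -- (2) convergence at continuity points
      (∀ x : ℝ, ContinuousAt f x →
        Tendsto (fun n : ℕ => h n x) atTop (nhds (f x))) ∧
      -- (3) local maxima are preserved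
      (∀ x₀ : ℝ, ContinuousAt f x₀ → IsLocalMax f x₀ →
        ∀ᶠ n : ℕ in atTop, h n x₀ = f x₀) ∧
      -- (4) monotonicity is preserved in the interior of monotone intervals
      (∀ s u : ℝ, ∀ n : ℕ, 1 ≤ n → s + 3 / (n : ℝ) ≤ u - 3 / (n : ℝ) →
        (MonotoneOn f (Set.Ioo s u) →
          MonotoneOn (h n) (Set.Icc (s + 3 / (n : ℝ)) (u - 3 / (n : ℝ)))) ∧
        (AntitoneOn f (Set.Ioo s u) →
          AntitoneOn (h n) (Set.Icc (s + 3 / (n : ℝ)) (u - 3 / (n : ℝ))))) ∧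
      -- (5) asymptotic control of the total variation
      Filter.limsup (fun n : ℕ => eVariationOn (h n) (Set.Icc 0 L)) atTop ≤
        eVariationOn f (Set.Icc 0 L) :=
  approximation_from_above_general L hL f hper hbd hBV hcont0
end

section
/- Let F⁺, F⁻ : ℝ → ℝ be bounded nondecreasing functions and set f = F⁺ − F⁻. Let φ : ℝ → ℝ be continuous, nonnegative, equal to 0 outside [−1, 1], and with ∫_ℝ φ = 1; for δ > 0 set φ_δ(t) = δ⁻¹ φ(t/δ). For each integer n ≥ 1 define ḡ_n(x) = ∫_ℝ F⁺(x − 1/n − y) φ_{1/n}(y) dy − ∫_ℝ F⁻(x + 1/n − y) φ_{1/n}(y) dy. Then: (i) each ḡ_n is continuous on ℝ; (ii) ḡ_n(x) ≤ f(x) for every x and n; (iii) ḡ_n(x) ≤ ḡ_{n+1}(x) for every x and n; (iv) if F⁺ and F⁻ are both continuous at a point x, then ḡ_n(x) → f(x) as n → ∞; (v) if F⁺ is constant on [x − 2/n, x] and F⁻ is constant on [x, x + 2/n], then ḡ_n(x) = f(x); (vi) for a < b: if F⁻ is constant on (a, b] and a ≤ b − 2/n, then ḡ_n is monotone nondecreasing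 on [a, b − 2/n]; if F⁺ is constant on [a, b) and a + 2/n ≤ b, then ḡ_n is monotone nonincreasing on [a + 2/n, b]. -/
/-!
Substituting `y = s / n` turns `ḡ_n(x)` into `∫ (F⁺(x - (1 + s)/n) - F⁻(x + (1 - s)/n)) φ(s) ds`.
For `s ∈ [-1, 1]` the two arguments lie in `[x - 2/n, x]` and `[x, x + 2/n]` and move towards `x`
as `n` grows, so monotonicity of `F±` and positivity of `φ` give `ḡ_n ≤ f`, monotonicity in `n`,
and the squeeze `F⁺(x - 2/n) - F⁻(x + 2/n) ≤ ḡ_n(x) ≤ f(x)` behind the convergence. Where `F±`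
are constant on those windows the integrands are a.e. constant on `supp φ`, giving exactness and
one-sided monotonicity. Continuity is that of the convolution of a locally integrable function
with a continuous compactly supported kernel.
-/

open Filter Set MeasureTheory Topology

structure IsMollifier (φ : ℝ → ℝ) : Prop where
  continuous : Continuous φ
  nonneg : ∀ t, 0 ≤ φ t
  eq_zero_of_notMem : ∀ t ∉ Icc (-1 : ℝ) 1, φ t = 0
  integral_eq_one : ∫ t, φ t = 1

namespace IsMollifier

variable {φ h h₁ h₂ : ℝ → ℝ} {v : ℝ}

theorem hasCompactSupport (hφ : IsMollifier φ) : HasCompactSupport φ :=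
  HasCompactSupport.intro isCompact_Icc hφ.eq_zero_of_notMem

theorem integrable (hφ : IsMollifier φ) : Integrable φ :=
  hφ.continuous.integrable_of_hasCompactSupport hφ.hasCompactSupport

theorem integral_mul_mono (hφ : IsMollifier φ) (hi₁ : Integrable fun s ↦ h₁ s * φ s)
    (hi₂ : Integrable fun s ↦ h₂ s * φ s) (hle : ∀ s ∈ Icc (-1 : ℝ) 1, h₁ s ≤ h₂ s) :
    ∫ s, h₁ s * φ s ≤ ∫ s, h₂ s * φ s := by
  refine integral_mono hi₁ hi₂ fun s ↦ ?_
  by_cases hs : s ∈ Icc (-1 : ℝ) 1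
  · exact mul_le_mul_of_nonneg_right (hle s hs) (hφ.nonneg s)
  · simp [hφ.eq_zero_of_notMem s hs]

theorem integral_const_mul (hφ : IsMollifier φ) (v : ℝ) : ∫ s, v * φ s = v := by
  rw [MeasureTheory.integral_const_mul, hφ.integral_eq_one, mul_one]

theorem integral_mul_le (hφ : IsMollifier φ) (hi : Integrable fun s ↦ h s * φ s)
    (hle : ∀ s ∈ Icc (-1 : ℝ) 1, h s ≤ v) : ∫ s, h s * φ s ≤ v := by
  simpa only [hφ.integral_const_mul] using hφ.integral_mul_mono hi (hφ.integrable.const_mul v) hle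

theorem le_integral_mul (hφ : IsMollifier φ) (hi : Integrable fun s ↦ h s * φ s)
    (hle : ∀ s ∈ Icc (-1 : ℝ) 1, v ≤ h s) : v ≤ ∫ s, h s * φ s := by
  simpa only [hφ.integral_const_mul] using hφ.integral_mul_mono (hφ.integrable.const_mul v) hi hle

theorem integral_mul_eq_of_eqOn_Ioo (hφ : IsMollifier φ) (heq : ∀ s ∈ Ioo (-1 : ℝ) 1, h s = v) :
    ∫ s, h s * φ s = v := by
  rw [← hφ.integral_const_mul v]
  refine integral_congr_ae ?_
  filter_upwards [(Ioo_ae_eq_Icc (a := (-1 : ℝ)) (b := 1) (μ := volume)).mem_iff] with s hs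
  by_cases hs' : s ∈ Icc (-1 : ℝ) 1
  · rw [heq s (hs.2 hs')]
  · simp [hφ.eq_zero_of_notMem s hs']

end IsMollifier

/-- `(G ∗ φ_δ)(c)` for `φ_δ = δ⁻¹ φ(·/δ)`, after the substitution `y = δ s`. -/
noncomputable def mollify (φ : ℝ → ℝ) (δ : ℝ) (G : ℝ → ℝ) (c : ℝ) : ℝ :=
  ∫ s, G (c - δ * s) * φ s

section Mollify

variable {φ G : ℝ → ℝ} {δ δ' c x v : ℝ}

theorem integral_mul_scaled_eq_mollify (G : ℝ → ℝ) (c : ℝ) {a : ℝ} (ha : 0 < a) :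
    ∫ y, G (c - y) * (a * φ (a * y)) = mollify φ a⁻¹ G c := by
  have hrw : ∀ y, G (c - y) * (a * φ (a * y)) = a • (fun s ↦ G (c - a⁻¹ * s) * φ s) (a * y) :=
    fun y ↦ by beta_reduce; rw [smul_eq_mul, inv_mul_cancel_left₀ ha.ne']; ring
  rw [integral_congr_ae (.of_forall hrw), integral_smul,
    Measure.integral_comp_mul_left (fun s ↦ G (c - a⁻¹ * s) * φ s), smul_smul,
    abs_of_pos (inv_pos.2 ha), mul_inv_cancel₀ ha.ne', one_smul, mollify]

theorem Monotone.integrable_mollify_integrand (hφc : Continuous φ) (hφs : HasCompactSupport φ)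
    (hG : Monotone G) (hδ : 0 ≤ δ) (c : ℝ) : Integrable fun s ↦ G (c - δ * s) * φ s := by
  have hanti : AntitoneOn (fun s ↦ G (c - δ * s)) (tsupport φ) :=
    fun s _ t _ hst ↦ hG (by nlinarith)
  exact (integrableOn_iff_integrable_of_support_subset
    ((Function.support_mul_subset_right _ _).trans (subset_tsupport φ))).1
    ((hanti.integrableOn_isCompact hφs).mul_continuousOn hφc.continuousOn hφs)

theorem Monotone.mollify_le (hφ : IsMollifier φ) (hG : Monotone G) (hδ : 0 ≤ δ) (c : ℝ) :
    mollify φ δ G c ≤ G (c + δ) :=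
  hφ.integral_mul_le (hG.integrable_mollify_integrand hφ.continuous hφ.hasCompactSupport hδ c)
    fun _ hs ↦ hG (by nlinarith [hs.1])

theorem Monotone.le_mollify (hφ : IsMollifier φ) (hG : Monotone G) (hδ : 0 ≤ δ) (c : ℝ) :
    G (c - δ) ≤ mollify φ δ G c :=
  hφ.le_integral_mul (hG.integrable_mollify_integrand hφ.continuous hφ.hasCompactSupport hδ c)
    fun _ hs ↦ hG (by nlinarith [hs.2])

theorem mollify_eq_of_eqOn_Ioo (hφ : IsMollifier φ) (hδ : 0 < δ)
    (heq : ∀ t ∈ Ioo (c - δ) (c + δ), G t = v) : mollify φ δ G c = v :=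
  hφ.integral_mul_eq_of_eqOn_Ioo fun _ hs ↦ heq _ ⟨by nlinarith [hs.2], by nlinarith [hs.1]⟩

theorem Monotone.monotone_mollify (hφ : IsMollifier φ) (hG : Monotone G) (hδ : 0 ≤ δ) :
    Monotone (mollify φ δ G) := fun c c' hcc' ↦
  have hi := hG.integrable_mollify_integrand hφ.continuous hφ.hasCompactSupport hδ
  hφ.integral_mul_mono (hi c) (hi c') fun _ _ ↦ hG (by linarith)

theorem Monotone.mollify_sub_self_le (hφ : IsMollifier φ) (hG : Monotone G) (hδ : 0 ≤ δ)
    (hδδ' : δ ≤ δ') (x : ℝ) : mollify φ δ' G (x - δ') ≤ mollify φ δ G (x - δ) :=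
  hφ.integral_mul_mono
    (hG.integrable_mollify_integrand hφ.continuous hφ.hasCompactSupport (hδ.trans hδδ') _)
    (hG.integrable_mollify_integrand hφ.continuous hφ.hasCompactSupport hδ _)
    fun _ hs ↦ hG (by nlinarith [hs.1])

theorem Monotone.mollify_add_self_le (hφ : IsMollifier φ) (hG : Monotone G) (hδ : 0 ≤ δ)
    (hδδ' : δ ≤ δ') (x : ℝ) : mollify φ δ G (x + δ) ≤ mollify φ δ' G (x + δ') :=
  hφ.integral_mul_mono
    (hG.integrable_mollify_integrand hφ.continuous hφ.hasCompactSupport hδ _)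
    (hG.integrable_mollify_integrand hφ.continuous hφ.hasCompactSupport (hδ.trans hδδ') _)
    fun _ hs ↦ hG (by nlinarith [hs.2])

theorem Monotone.continuous_mollify (hφc : Continuous φ) (hφs : HasCompactSupport φ)
    (hG : Monotone G) (hδ : 0 < δ) : Continuous (mollify φ δ G) := by
  set ψ : ℝ → ℝ := fun y ↦ δ⁻¹ * φ (δ⁻¹ * y)
  have hconv : mollify φ δ G = convolution G ψ (ContinuousLinearMap.mul ℝ ℝ) := by
    ext c
    rw [convolution_mul_swap, integral_mul_scaled_eq_mollify G c (inv_pos.2 hδ), inv_inv]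
  have hψ : HasCompactSupport ψ := (hφs.comp_smul (inv_ne_zero hδ.ne')).mul_left
  rw [hconv]
  exact hψ.continuous_convolution_right _ hG.locallyIntegrable
    (continuous_const.mul (hφc.comp (continuous_const.mul continuous_id)))

theorem Monotone.tendsto_mollify {ι : Type*} {l : Filter ι} {c δ : ι → ℝ} (hφ : IsMollifier φ)
    (hG : Monotone G) (hGx : ContinuousAt G x) (hc : Tendsto c l (𝓝 x))
    (hδ : Tendsto δ l (𝓝 0)) (hδ0 : ∀ᶠ i in l, 0 ≤ δ i) :
    Tendsto (fun i ↦ mollify φ (δ i) G (c i)) l (𝓝 (G x)) := by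
  have hlow : Tendsto (fun i ↦ G (c i - δ i)) l (𝓝 (G x)) :=
    hGx.tendsto.comp (by simpa using hc.sub hδ)
  have hup : Tendsto (fun i ↦ G (c i + δ i)) l (𝓝 (G x)) :=
    hGx.tendsto.comp (by simpa using hc.add hδ)
  exact tendsto_of_tendsto_of_tendsto_of_le_of_le' hlow hup
    (hδ0.mono fun i hi ↦ hG.le_mollify hφ hi _) (hδ0.mono fun i hi ↦ hG.mollify_le hφ hi _)

end Mollify

noncomputable def shiftedMollify (φ : ℝ → ℝ) (δ : ℝ) (Fp Fm : ℝ → ℝ) (x : ℝ) : ℝ :=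
  mollify φ δ Fp (x - δ) - mollify φ δ Fm (x + δ)

section ShiftedMollify

variable {φ Fp Fm : ℝ → ℝ} {δ δ' x a b : ℝ}

theorem continuous_shiftedMollify (hφ : IsMollifier φ) (hFp : Monotone Fp) (hFm : Monotone Fm)
    (hδ : 0 < δ) : Continuous (shiftedMollify φ δ Fp Fm) :=
  ((hFp.continuous_mollify hφ.continuous hφ.hasCompactSupport hδ).comp
      (continuous_id.sub continuous_const)).sub
    ((hFm.continuous_mollify hφ.continuous hφ.hasCompactSupport hδ).comp
      (continuous_id.add continuous_const))

theorem shiftedMollify_le (hφ : IsMollifier φ) (hFp : Monotone Fp) (hFm : Monotone Fm)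
    (hδ : 0 ≤ δ) (x : ℝ) : shiftedMollify φ δ Fp Fm x ≤ Fp x - Fm x :=
  sub_le_sub (by simpa using hFp.mollify_le hφ hδ (x - δ))
    (by simpa using hFm.le_mollify hφ hδ (x + δ))

theorem shiftedMollify_le_of_le (hφ : IsMollifier φ) (hFp : Monotone Fp) (hFm : Monotone Fm)
    (hδ' : 0 ≤ δ') (hδδ' : δ' ≤ δ) (x : ℝ) :
    shiftedMollify φ δ Fp Fm x ≤ shiftedMollify φ δ' Fp Fm x :=
  sub_le_sub (hFp.mollify_sub_self_le hφ hδ' hδδ' x) (hFm.mollify_add_self_le hφ hδ' hδδ' x)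

theorem tendsto_shiftedMollify {ι : Type*} {l : Filter ι} {δ : ι → ℝ} (hφ : IsMollifier φ)
    (hFp : Monotone Fp) (hFm : Monotone Fm) (hFpx : ContinuousAt Fp x) (hFmx : ContinuousAt Fm x)
    (hδ : Tendsto δ l (𝓝 0)) (hδ0 : ∀ᶠ i in l, 0 ≤ δ i) :
    Tendsto (fun i ↦ shiftedMollify φ (δ i) Fp Fm x) l (𝓝 (Fp x - Fm x)) :=
  (hFp.tendsto_mollify hφ hFpx (by simpa using tendsto_const_nhds.sub hδ) hδ hδ0).sub
    (hFm.tendsto_mollify hφ hFmx (by simpa using tendsto_const_nhds.add hδ) hδ hδ0)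

theorem shiftedMollify_eq (hφ : IsMollifier φ) (hδ : 0 < δ)
    (hFp : ∀ t ∈ Ioo (x - 2 * δ) x, Fp t = Fp x) (hFm : ∀ t ∈ Ioo x (x + 2 * δ), Fm t = Fm x) :
    shiftedMollify φ δ Fp Fm x = Fp x - Fm x := by
  rw [shiftedMollify,
    mollify_eq_of_eqOn_Ioo hφ hδ fun t ht ↦ hFp t ⟨by linarith [ht.1], by linarith [ht.2]⟩,
    mollify_eq_of_eqOn_Ioo hφ hδ fun t ht ↦ hFm t ⟨by linarith [ht.1], by linarith [ht.2]⟩]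

theorem monotoneOn_shiftedMollify (hφ : IsMollifier φ) (hFp : Monotone Fp) (hδ : 0 < δ)
    (hFm : ∀ y ∈ Ioc a b, ∀ z ∈ Ioc a b, Fm y = Fm z) :
    MonotoneOn (shiftedMollify φ δ Fp Fm) (Icc a (b - 2 * δ)) := by
  have hconst : ∀ x ∈ Icc a (b - 2 * δ), mollify φ δ Fm (x + δ) = Fm b := fun x hx ↦
    mollify_eq_of_eqOn_Ioo hφ hδ fun t ht ↦
      hFm t ⟨by linarith [ht.1, hx.1], by linarith [ht.2, hx.2]⟩ b
        (right_mem_Ioc.2 (by linarith [hx.1, hx.2]))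
  intro x hx y hy hxy
  rw [shiftedMollify, shiftedMollify, hconst x hx, hconst y hy]
  exact sub_le_sub_right (hFp.monotone_mollify hφ hδ.le (by linarith)) _

theorem antitoneOn_shiftedMollify (hφ : IsMollifier φ) (hFm : Monotone Fm) (hδ : 0 < δ)
    (hFp : ∀ y ∈ Ico a b, ∀ z ∈ Ico a b, Fp y = Fp z) :
    AntitoneOn (shiftedMollify φ δ Fp Fm) (Icc (a + 2 * δ) b) := by
  have hconst : ∀ x ∈ Icc (a + 2 * δ) b, mollify φ δ Fp (x - δ) = Fp a := fun x hx ↦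
    mollify_eq_of_eqOn_Ioo hφ hδ fun t ht ↦
      hFp t ⟨by linarith [ht.1, hx.1], by linarith [ht.2, hx.2]⟩ a
        (left_mem_Ico.2 (by linarith [hx.1, hx.2]))
  intro x hx y hy hxy
  rw [shiftedMollify, shiftedMollify, hconst x hx, hconst y hy]
  exact sub_le_sub_left (hFm.monotone_mollify hφ hδ.le (by linarith)) _

end ShiftedMollify

theorem shifted_mollification_from_below_general
    (Fp Fm : ℝ → ℝ)
    (hFp : Monotone Fp) (hFm : Monotone Fm)
    (f : ℝ → ℝ) (hf : ∀ x : ℝ, f x = Fp x - Fm x)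
    (φ : ℝ → ℝ) (hφc : Continuous φ) (hφ0 : ∀ t : ℝ, 0 ≤ φ t)
    (hφsupp : ∀ t : ℝ, t ∉ Set.Icc (-1 : ℝ) 1 → φ t = 0)
    (hφint : ∫ t : ℝ, φ t = 1)
    (gbar : ℕ → ℝ → ℝ)
    (hgbar : ∀ n : ℕ, 1 ≤ n → ∀ x : ℝ,
      gbar n x =
        (∫ y : ℝ, Fp (x - 1 / (n : ℝ) - y) * ((n : ℝ) * φ ((n : ℝ) * y))) -
        ∫ y : ℝ, Fm (x + 1 / (n : ℝ) - y) * ((n : ℝ) * φ ((n : ℝ) * y))) :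
    -- (i) continuity
    (∀ n : ℕ, 1 ≤ n → Continuous (gbar n)) ∧
    -- (ii) approximation from below
    (∀ n : ℕ, 1 ≤ n → ∀ x : ℝ, gbar n x ≤ f x) ∧
    -- (iii) monotonicity in n
    (∀ n : ℕ, 1 ≤ n → ∀ x : ℝ, gbar n x ≤ gbar (n + 1) x) ∧
    -- (iv) convergence at common continuity points
    (∀ x : ℝ, ContinuousAt Fp x → ContinuousAt Fm x →
      Tendsto (fun n : ℕ => gbar n x) atTop (nhds (f x))) ∧
    -- (v) exactness where the one-sided pieces are constant
    (∀ n : ℕ, 1 ≤ n → ∀ x : ℝ,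
      (∀ y ∈ Set.Icc (x - 2 / (n : ℝ)) x, Fp y = Fp x) →
      (∀ y ∈ Set.Icc x (x + 2 / (n : ℝ)), Fm y = Fm x) →
      gbar n x = f x) ∧
    -- (vi) one-sided monotonicity
    (∀ n : ℕ, 1 ≤ n → ∀ a b : ℝ, a < b →
      ((∀ y ∈ Set.Ioc a b, ∀ z ∈ Set.Ioc a b, Fm y = Fm z) →
        a ≤ b - 2 / (n : ℝ) →
        MonotoneOn (gbar n) (Set.Icc a (b - 2 / (n : ℝ)))) ∧
      ((∀ y ∈ Set.Ico a b, ∀ z ∈ Set.Ico a b, Fp y = Fp z) →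
        a + 2 / (n : ℝ) ≤ b →
        AntitoneOn (gbar n) (Set.Icc (a + 2 / (n : ℝ)) b))) := by
  obtain rfl : f = fun x ↦ Fp x - Fm x := funext hf
  have hφ : IsMollifier φ := ⟨hφc, hφ0, hφsupp, hφint⟩
  have hδ : ∀ n : ℕ, 1 ≤ n → 0 < 1 / (n : ℝ) := fun n hn ↦ by positivity
  have hg : ∀ n : ℕ, 1 ≤ n → gbar n = shiftedMollify φ (1 / n) Fp Fm := fun n hn ↦ by
    ext x
    have hn' : (0 : ℝ) < n := by exact_mod_cast hn
    rw [hgbar n hn x, integral_mul_scaled_eq_mollify _ _ hn',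
      integral_mul_scaled_eq_mollify _ _ hn', shiftedMollify, one_div]
  have h2 : ∀ n : ℕ, 2 / (n : ℝ) = 2 * (1 / n) := fun n ↦ by ring
  refine ⟨fun n hn ↦ hg n hn ▸ continuous_shiftedMollify hφ hFp hFm (hδ n hn),
    fun n hn x ↦ hg n hn ▸ shiftedMollify_le hφ hFp hFm (hδ n hn).le x,
    fun n hn x ↦ ?_, fun x hFpx hFmx ↦ ?_, fun n hn x hpc hmc ↦ ?_, fun n hn a b _ ↦ ?_⟩
  · rw [hg n hn, hg (n + 1) (by omega)]
    exact shiftedMollify_le_of_le hφ hFp hFm (by positivity)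
      (one_div_le_one_div_of_le (by exact_mod_cast hn) (by simp)) x
  · refine (tendsto_shiftedMollify hφ hFp hFm hFpx hFmx tendsto_one_div_atTop_nhds_zero_nat
      (.of_forall fun n ↦ by positivity)).congr' ?_
    filter_upwards [eventually_ge_atTop 1] with n hn
    rw [hg n hn]
  · rw [h2] at hpc hmc
    rw [hg n hn]
    exact shiftedMollify_eq hφ (hδ n hn) (fun t ht ↦ hpc t (Ioo_subset_Icc_self ht))
      fun t ht ↦ hmc t (Ioo_subset_Icc_self ht)
  · rw [hg n hn, h2]
    exact ⟨fun hFm _ ↦ monotoneOn_shiftedMollify hφ hFp (hδ n hn) hFm,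
      fun hFp _ ↦ antitoneOn_shiftedMollify hφ hFm (hδ n hn) hFp⟩

/-- Properties of the shifted mollification `ḡ_n` from the proof of Lemma 3.2
(Aprox1): `f = F⁺ − F⁻` with `F⁺, F⁻` bounded nondecreasing,
`φ_δ(t) = δ⁻¹ φ(t/δ)` a mollifier, and
`ḡ_n(x) = (F⁺ ∗ φ_{1/n})(x − 1/n) − (F⁻ ∗ φ_{1/n})(x + 1/n)`. -/
theorem shifted_mollification_from_below
    (Fp Fm : ℝ → ℝ)
    (hFp : Monotone Fp) (hFm : Monotone Fm)
    (hFpbd : ∃ C : ℝ, ∀ x : ℝ, |Fp x| ≤ C)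
    (hFmbd : ∃ C : ℝ, ∀ x : ℝ, |Fm x| ≤ C)
    (f : ℝ → ℝ) (hf : ∀ x : ℝ, f x = Fp x - Fm x)
    (φ : ℝ → ℝ) (hφc : Continuous φ) (hφ0 : ∀ t : ℝ, 0 ≤ φ t)
    (hφsupp : ∀ t : ℝ, t ∉ Set.Icc (-1 : ℝ) 1 → φ t = 0)
    (hφint : ∫ t : ℝ, φ t = 1)
    (gbar : ℕ → ℝ → ℝ)
    (hgbar : ∀ n : ℕ, 1 ≤ n → ∀ x : ℝ,
      gbar n x =
        (∫ y : ℝ, Fp (x - 1 / (n : ℝ) - y) * ((n : ℝ) * φ ((n : ℝ) * y))) -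
        ∫ y : ℝ, Fm (x + 1 / (n : ℝ) - y) * ((n : ℝ) * φ ((n : ℝ) * y))) :
    -- (i) continuity
    (∀ n : ℕ, 1 ≤ n → Continuous (gbar n)) ∧
    -- (ii) approximation from below
    (∀ n : ℕ, 1 ≤ n → ∀ x : ℝ, gbar n x ≤ f x) ∧
    -- (iii) monotonicity in n
    (∀ n : ℕ, 1 ≤ n → ∀ x : ℝ, gbar n x ≤ gbar (n + 1) x) ∧
    -- (iv) convergence at common continuity points
    (∀ x : ℝ, ContinuousAt Fp x → ContinuousAt Fm x →
      Tendsto (fun n : ℕ => gbar n x) atTop (nhds (f x))) ∧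
    -- (v) exactness where the one-sided pieces are constant
    (∀ n : ℕ, 1 ≤ n → ∀ x : ℝ,
      (∀ y ∈ Set.Icc (x - 2 / (n : ℝ)) x, Fp y = Fp x) →
      (∀ y ∈ Set.Icc x (x + 2 / (n : ℝ)), Fm y = Fm x) →
      gbar n x = f x) ∧
    -- (vi) one-sided monotonicity
    (∀ n : ℕ, 1 ≤ n → ∀ a b : ℝ, a < b →
      ((∀ y ∈ Set.Ioc a b, ∀ z ∈ Set.Ioc a b, Fm y = Fm z) →
        a ≤ b - 2 / (n : ℝ) →
        MonotoneOn (gbar n) (Set.Icc a (b - 2 / (n : ℝ)))) ∧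
      ((∀ y ∈ Set.Ico a b, ∀ z ∈ Set.Ico a b, Fp y = Fp z) →
        a + 2 / (n : ℝ) ≤ b →
        AntitoneOn (gbar n) (Set.Icc (a + 2 / (n : ℝ)) b))) :=
  shifted_mollification_from_below_general Fp Fm hFp hFm f hf φ hφc hφ0 hφsupp hφint gbar hgbar
end

section
/- Let a < b be real numbers and let f : ℝ → ℝ have bounded variation on [a, b]. Then there exists g : ℝ → ℝ such that: (i) the set { x ∈ [a, b] : g(x) ≠ f(x) } is countable; (ii) Var(g; [a, b]) ≤ Var(f; [a, b]); and (iii) for every x ∈ (a, b), liminf_{z→x} g(z) ≤ g(x) ≤ limsup_{z→x} g(z), where the liminf and limsup are taken along the punctured neighborhood filter of x within [a, b]. -/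
open Filter Set Topology Function

/-!
Extend `f` to `ℝ` by constants outside `[a, b]`, which does not change its variation, and take
for `g` the right-limit regularization `x ↦ f (x⁺)`. Being a difference of monotone functions, `f`
is continuous, hence equal to `g`, off a countable set; each `g x` is a cluster value of `f` near
`x`, so the variation of `g` is no larger; and `g` is right-continuous, so `g x` is a limit of `g`
along `𝓝[>] x ≤ 𝓝[[a, b] \ {x}] x` and lies between the liminf and the limsup.
-/

section LinearOrder

variable {α : Type*} [LinearOrder α]

theorem eVariationOn_IccExtend {E : Type*} [PseudoEMetricSpace E] {a b : α} (h : a ≤ b)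
    (f : α → E) :
    eVariationOn (IccExtend h (f ∘ (↑))) univ = eVariationOn f (Icc a b) := by
  have := eVariationOn.comp_eq_of_monotoneOn f (Subtype.val ∘ projIcc a b h)
    (((Subtype.mono_coe _).comp (monotone_projIcc h)).monotoneOn univ)
  rwa [image_univ, range_comp, range_projIcc, image_univ, Subtype.range_coe] at this

theorem BoundedVariationOn.isBounded_image {E : Type*} [PseudoMetricSpace E]
    {f : α → E} {s : Set α} (hf : BoundedVariationOn f s) : Bornology.IsBounded (f '' s) := by
  refine Metric.isBounded_iff.2 ⟨(eVariationOn f s).toReal, ?_⟩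
  rintro _ ⟨x, hx, rfl⟩ _ ⟨y, hy, rfl⟩
  rw [dist_edist]
  exact ENNReal.toReal_mono hf (eVariationOn.edist_le f hx hy)

variable [TopologicalSpace α] [OrderTopology α]

theorem LocallyBoundedVariationOn.countable_not_continuousAt {f : α → ℝ}
    (hf : LocallyBoundedVariationOn f univ) : {x | ¬ContinuousAt f x}.Countable := by
  obtain ⟨p, q, hp, hq, rfl⟩ := hf.exists_monotoneOn_sub_monotoneOn
  refine ((monotoneOn_univ.1 hp).countable_not_continuousAt.union
    (monotoneOn_univ.1 hq).countable_not_continuousAt).mono fun x hx => ?_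
  by_contra h
  simp only [mem_union, mem_ofPred_eq, not_or, not_not] at h
  exact hx (h.1.sub h.2)

theorem BoundedVariationOn.countable_rightLim_ne {f : α → ℝ}
    (hf : BoundedVariationOn f univ) : {x | Function.rightLim f x ≠ f x}.Countable :=
  hf.locallyBoundedVariationOn.countable_not_continuousAt.mono fun _ hx h =>
    hx (ContinuousAt.continuousWithinAt h).rightLim_eq

theorem nhdsGT_le_nhdsWithin_Icc_diff {a b x : α} (hx : x ∈ Ioo a b) :
    𝓝[>] x ≤ 𝓝[Icc a b \ {x}] x := by
  rw [← nhdsWithin_Ioo_eq_nhdsGT hx.2]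
  exact nhdsWithin_mono x fun z hz => ⟨⟨(hx.1.trans hz.1).le, hz.2.le⟩, hz.1.ne'⟩

end LinearOrder

namespace Filter

variable {α β : Type*} [ConditionallyCompleteLinearOrder β] [TopologicalSpace β]
  [OrderTopology β] {u : α → β} {l l' : Filter α} [l'.NeBot] {y : β}

theorem liminf_le_of_tendsto_of_le (h : Tendsto u l' (𝓝 y)) (hl : l' ≤ l)
    (hu : IsBoundedUnder (· ≥ ·) l u) : liminf u l ≤ y :=
  (liminf_le_liminf_of_le hl hu h.isBoundedUnder_le.isCoboundedUnder_ge).trans_eq h.liminf_eq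

theorem le_limsup_of_tendsto_of_le (h : Tendsto u l' (𝓝 y)) (hl : l' ≤ l)
    (hu : IsBoundedUnder (· ≤ ·) l u) : y ≤ limsup u l :=
  h.limsup_eq.symm.trans_le (limsup_le_limsup_of_le hl h.isBoundedUnder_ge.isCoboundedUnder_le hu)

end Filter

/-- Every function of bounded variation on `[a, b]` admits a good representative,
differing from it on a countable set, with no larger variation, whose value at
each interior point lies between the liminf and the limsup of the function along
the punctured neighborhood filter within `[a, b]` (the standing assumption
(2.1)/(rd0) of the paper). -/
theorem exists_good_representative
    (a b : ℝ) (hab : a < b) (f : ℝ → ℝ)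
    (hBV : eVariationOn f (Set.Icc a b) ≠ ⊤) :
    ∃ g : ℝ → ℝ,
      -- (i) g agrees with f off a countable set
      Set.Countable {x ∈ Set.Icc a b | g x ≠ f x} ∧
      -- (ii) g has no larger variation
      eVariationOn g (Set.Icc a b) ≤ eVariationOn f (Set.Icc a b) ∧
      -- (iii) good-representative property at interior points
      (∀ x ∈ Set.Ioo a b,
        Filter.liminf g (nhdsWithin x (Set.Icc a b \ {x})) ≤ g x ∧
        g x ≤ Filter.limsup g (nhdsWithin x (Set.Icc a b \ {x}))) := by
  set F := IccExtend hab.le (f ∘ (↑))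
  have hF : BoundedVariationOn F univ := by rwa [BoundedVariationOn, eVariationOn_IccExtend]
  have hFf : EqOn F f (Icc a b) := fun x hx => IccExtend_of_mem hab.le _ hx
  have hg : Bornology.IsBounded (range (rightLim F)) :=
    image_univ ▸ hF.rightLim.isBounded_image
  refine ⟨rightLim F, ?_, ?_, fun x hx => ?_⟩
  · exact hF.countable_rightLim_ne.mono fun x hx => by
      simpa only [mem_ofPred_eq, hFf hx.1] using hx.2
  · calc eVariationOn (rightLim F) (Icc a b)
        ≤ eVariationOn (rightLim F) univ := eVariationOn.mono _ (subset_univ _)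
      _ ≤ eVariationOn F univ := eVariationOn.eVariationOn_rightLim_le isOpen_univ
      _ = eVariationOn f (Icc a b) := eVariationOn_IccExtend hab.le f
  · have hright : Tendsto (rightLim F) (𝓝[>] x) (𝓝 (rightLim F x)) :=
      hF.continuousWithinAt_rightLim.mono Ioi_subset_Ici_self
    exact ⟨liminf_le_of_tendsto_of_le hright (nhdsGT_le_nhdsWithin_Icc_diff hx)
        hg.bddBelow.isBoundedUnder_of_range,
      le_limsup_of_tendsto_of_le hright (nhdsGT_le_nhdsWithin_Icc_diff hx)
        hg.bddAbove.isBoundedUnder_of_range⟩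
end
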